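/- arXiv:1410.0434 — 11 statements merged into one kernel-verified Lean document; each statement's English description precedes it below -/
import Mathlib

section
/- Fix reals S_A>0, θ>0, λ>0, a prior variance V>0, and an integer t≥1. Then S_M*(t) := max(1/√(λθ) − 1/V, 0)·S_A·V/(1+t·S_A·V) is a global minimizer over [0,∞) of the map S_M ↦ F(t,S_M); that is, F(t,S_M) ≥ F(t,S_M*(t)) for every S_M ≥ 0. -/
/-! After the substitution `x = S_A + (1 + t·S_A·V)·S_M`, which maps `[0, ∞)` onto `[S_A, ∞)`,
the cost becomes `C + K / x + m·x` with `K = m·c²` and `c = V·S_A / √(λθ)`. On `(0, ∞)` the map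
`x ↦ c² / x + x` decreases up to `c` and increases after it, so on `[S_A, ∞)` it is minimized at
`max S_A c`, which is exactly the image of `S_M*(t)`. -/

/-- Posterior variance update: `ν̂(V,Λ) = V/(1+V·Λ)`. -/
noncomputable def nuhat (V Lam : ℝ) : ℝ := V / (1 + V * Lam)

/-- Coordinated myopic cost `F(t,S_M)`. -/
noncomputable def Fcoord (SA th lam V : ℝ) (t : ℕ) (SM : ℝ) : ℝ :=
  nuhat V ((t : ℝ) * SA * SM / (SA + SM)) + lam * (t : ℝ) * (1 + th * SM)

open Real

lemma sq_div_add_self_max_le {a c x : ℝ} (hc : 0 < c) (hx : 0 < x) (hax : a ≤ x) :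
    c ^ 2 / max a c + max a c ≤ c ^ 2 / x + x := by
  set y := max a c
  have hy0 : 0 < y := lt_max_of_lt_right hc
  -- `c² / x + x - (c² / y + y) = (x - y)(x·y - c²) / (x·y)`
  have key : 0 ≤ (x - y) * (x * y - c ^ 2) := by
    rcases le_total c a with hca | hac
    · have hya : y = a := max_eq_left hca
      have hyx : y ≤ x := hya ▸ hax
      have hcy : c ≤ y := le_max_right a c
      exact mul_nonneg (sub_nonneg.2 hyx) (by nlinarith)
    · have hyc : y = c := max_eq_right hac
      rw [hyc]
      nlinarith [mul_nonneg hc.le (sq_nonneg (x - c))]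
  rw [div_add' _ _ _ hy0.ne', div_add' _ _ _ hx.ne', div_le_div_iff₀ hy0 hx]
  nlinarith

lemma Fcoord_eq (SA th lam V : ℝ) (hSA : 0 < SA) (hV : 0 < V) (t : ℕ) {S : ℝ} (hS : 0 ≤ S) :
    Fcoord SA th lam V t S =
      lam * t + V / (1 + t * SA * V) - lam * t * th * SA / (1 + t * SA * V)
        + V ^ 2 * t * SA ^ 2 / (1 + t * SA * V) / (SA + (1 + t * SA * V) * S)
        + lam * t * th / (1 + t * SA * V) * (SA + (1 + t * SA * V) * S) := by
  have hA : 0 < 1 + (t : ℝ) * SA * V := by positivity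
  have hx : 0 < SA + (1 + t * SA * V) * S := by positivity
  have hSAS : 0 < SA + S := by positivity
  have hden : 0 < 1 + V * (t * SA * S / (SA + S)) := by positivity
  unfold Fcoord nuhat
  field_simp
  ring

lemma add_mul_max_sub_div_eq_max (SA V s : ℝ) (hSA : 0 < SA) (hV : 0 < V) (t : ℕ) :
    SA + (1 + t * SA * V) * (max (1 / s - 1 / V) 0 * SA * V / (1 + t * SA * V))
      = max SA (V * SA / s) := by
  have hA : 0 < 1 + (t : ℝ) * SA * V := by positivity
  rw [mul_div_cancel₀ _ hA.ne', mul_assoc (max _ _),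
    max_mul_of_nonneg _ _ (by positivity), add_max, zero_mul, add_zero, max_comm]
  congr 1
  field_simp
  ring

theorem stmt_0_general (SA th lam V : ℝ) (hSA : 0 < SA) (hth : 0 < th) (hlam : 0 < lam)
    (hV : 0 < V) (t : ℕ)
    (SMstar : ℝ)
    (hstar : SMstar = max (1 / Real.sqrt (lam * th) - 1 / V) 0 * SA * V / (1 + (t : ℝ) * SA * V)) :
    ∀ SM : ℝ, 0 ≤ SM → Fcoord SA th lam V t SM ≥ Fcoord SA th lam V t SMstar := by
  intro SM hSM
  have hlt : 0 < lam * th := mul_pos hlam hth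
  set c := V * SA / √(lam * th) with hc_def
  have hc : 0 < c := by positivity
  have hstar_x : SA + (1 + t * SA * V) * SMstar = max SA c := by
    rw [hstar, add_mul_max_sub_div_eq_max SA V _ hSA hV t]
  have hstar0 : 0 ≤ SMstar := by rw [hstar]; positivity
  have hK : V ^ 2 * t * SA ^ 2 / (1 + t * SA * V) = lam * t * th / (1 + t * SA * V) * c ^ 2 := by
    rw [hc_def, div_pow, sq_sqrt hlt.le]
    field_simp
  have hm : 0 ≤ lam * t * th / (1 + t * SA * V) := by positivity
  have hmin := mul_le_mul_of_nonneg_left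
    (sq_div_add_self_max_le (x := SA + (1 + t * SA * V) * SM) hc (by positivity)
      (le_add_of_nonneg_right (by positivity))) hm
  rw [ge_iff_le, Fcoord_eq SA th lam V hSA hV t hSM, Fcoord_eq SA th lam V hSA hV t hstar0,
    hstar_x, hK]
  rw [mul_add, mul_add, ← mul_div_assoc, ← mul_div_assoc] at hmin
  linarith

/-- for fixed `t ≥ 1`, the closed-form
`S_M*(t) = max(1/√(λθ) − 1/V, 0)·S_A·V/(1+t·S_A·V)` globally minimizes
`S_M ↦ F(t,S_M)` over `[0,∞)`. -/
theorem stmt_0 (SA th lam V : ℝ) (hSA : 0 < SA) (hth : 0 < th) (hlam : 0 < lam)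
    (hV : 0 < V) (t : ℕ) (ht : 1 ≤ t)
    (SMstar : ℝ)
    (hstar : SMstar = max (1 / Real.sqrt (lam * th) - 1 / V) 0 * SA * V / (1 + (t : ℝ) * SA * V)) :
    ∀ SM : ℝ, 0 ≤ SM → Fcoord SA th lam V t SM ≥ Fcoord SA th lam V t SMstar :=
  stmt_0_general SA th lam V hSA hth hlam hV t SMstar hstar
end

section
/- Fix reals S_A>0, θ≥0, λ>0, an integer t≥0, and a real V with V > √(λθ). Then −S_A·(√(λθ) − V)² + λ·(1+(t+1)·S_A·V)·(1+t·S_A·V) ≤ 0 holds if and only if both λ·(t+1)·t·S_A < 1 and V ≥ v_th(λ,t). -/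
/-!
With `s = √(λθ)`, so that `s² = λθ`, the left-hand side equals `-S_A · q(V)` for the
quadratic `q(V) = a V² - b V - c` with `a = 1 - λ(t+1)t S_A`, `b = 2s + λ(2t+1)` and
`c = λ/S_A - λθ`, and `q(s) < 0`. If `a ≤ 0` then `q` is nonincreasing on `[0, ∞)`, so
`q(V) < 0`. If `a > 0` then `s` lies strictly between the roots of `q`, so for `V > s` we have
`q(V) ≥ 0` exactly when `V` is at least the larger root `(b/2 + √(b²/4 + ac))/a`; this root is
`v_th` because `b²/4 + ac` is `λ` times the radicand in `v_th`.
-/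
noncomputable def vth (SA th lam : ℝ) (t : ℕ) : ℝ :=
  (Real.sqrt (lam * th) + lam * ((t : ℝ) + 1 / 2) +
      Real.sqrt lam *
        Real.sqrt (Real.sqrt (lam * th) * (2 * (t : ℝ) + 1) +
          lam * th * ((t : ℝ) + 1) * (t : ℝ) * SA + lam / 4 + 1 / SA)) /
    (1 - lam * ((t : ℝ) + 1) * (t : ℝ) * SA)

section Quadratic

variable {a b c s V : ℝ}

theorem quadratic_lt_zero_of_nonpos (ha : a ≤ 0) (hb : 0 ≤ b) (hs : 0 ≤ s) (hsV : s ≤ V)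
    (hqs : a * s ^ 2 - b * s - c < 0) : a * V ^ 2 - b * V - c < 0 := by
  have hdiff : a * V ^ 2 - b * V - c - (a * s ^ 2 - b * s - c) = (V - s) * (a * (V + s) - b) := by
    ring
  have hprod : (V - s) * (a * (V + s) - b) ≤ 0 :=
    mul_nonpos_of_nonneg_of_nonpos (by linarith) (by nlinarith)
  linarith

theorem quadratic_nonneg_iff_of_pos {R : ℝ} (ha : 0 < a) (hR : 0 ≤ R)
    (hR2 : R ^ 2 = b ^ 2 / 4 + a * c) (hqs : a * s ^ 2 - b * s - c < 0) (hsV : s ≤ V) :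
    0 ≤ a * V ^ 2 - b * V - c ↔ (b / 2 + R) / a ≤ V := by
  have hfactor (x : ℝ) :
      a * (a * x ^ 2 - b * x - c) = (a * x - b / 2 - R) * (a * x - b / 2 + R) := by
    linear_combination hR2
  have hlow_s : 0 < a * s - b / 2 + R := by
    have := hfactor s
    nlinarith [mul_neg_of_pos_of_neg ha hqs]
  have hlow_V : 0 < a * V - b / 2 + R := by nlinarith
  rw [div_le_iff₀ ha, ← mul_nonneg_iff_of_pos_left ha, hfactor,
    mul_nonneg_iff_of_pos_right hlow_V]
  constructor <;> intro h <;> linarith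

theorem quadratic_nonneg_iff {R : ℝ} (hb : 0 ≤ b) (hs : 0 ≤ s) (hsV : s ≤ V) (hR : 0 ≤ R)
    (hR2 : R ^ 2 = b ^ 2 / 4 + a * c) (hqs : a * s ^ 2 - b * s - c < 0) :
    0 ≤ a * V ^ 2 - b * V - c ↔ 0 < a ∧ (b / 2 + R) / a ≤ V := by
  rcases lt_or_ge 0 a with ha | ha
  · simp only [ha, true_and]
    exact quadratic_nonneg_iff_of_pos ha hR hR2 hqs hsV
  · simp only [ha.not_gt, false_and, iff_false, not_le]
    exact quadratic_lt_zero_of_nonpos ha hb hs hsV hqs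

end Quadratic

section Coefficients

variable {SA th lam s : ℝ} {t : ℕ}

theorem neg_mul_sq_add_eq_neg_mul_quadratic (hSA : SA ≠ 0) (hs2 : s ^ 2 = lam * th) (V : ℝ) :
    -SA * (s - V) ^ 2 + lam * (1 + ((t : ℝ) + 1) * SA * V) * (1 + t * SA * V) =
      -SA * ((1 - lam * ((t : ℝ) + 1) * t * SA) * V ^ 2 - (2 * s + lam * (2 * (t : ℝ) + 1)) * V
        - (lam / SA - lam * th)) := by
  field_simp
  linear_combination (-SA) * hs2

theorem quadratic_at_sqrt_neg (hSA : 0 < SA) (hlam : 0 < lam) (hs : 0 ≤ s)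
    (hs2 : s ^ 2 = lam * th) :
    (1 - lam * ((t : ℝ) + 1) * t * SA) * s ^ 2 - (2 * s + lam * (2 * (t : ℝ) + 1)) * s
      - (lam / SA - lam * th) < 0 := by
  have hsum : (1 - lam * ((t : ℝ) + 1) * t * SA) * s ^ 2 - (2 * s + lam * (2 * (t : ℝ) + 1)) * s
      - (lam / SA - lam * th)
      = -(lam * ((t : ℝ) + 1) * t * SA * s ^ 2 + lam * (2 * (t : ℝ) + 1) * s + lam / SA) := by
    linear_combination -hs2
  rw [hsum, neg_neg_iff_pos]
  positivity

theorem mul_radicand_eq_discrim (hSA : SA ≠ 0) (hs2 : s ^ 2 = lam * th) :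
    lam * (s * (2 * (t : ℝ) + 1) + lam * th * ((t : ℝ) + 1) * t * SA + lam / 4 + 1 / SA) =
      (2 * s + lam * (2 * (t : ℝ) + 1)) ^ 2 / 4
        + (1 - lam * ((t : ℝ) + 1) * t * SA) * (lam / SA - lam * th) := by
  field_simp
  linear_combination (-4 * SA) * hs2

end Coefficients

/-- for `V > √(λθ)`, the inequality
`−S_A·(√(λθ) − V)² + λ·(1+(t+1)·S_A·V)·(1+t·S_A·V) ≤ 0` holds iff
`λ·(t+1)·t·S_A < 1` and `V ≥ v_th(λ,t)`. -/
theorem stmt_1 (SA th lam V : ℝ) (hSA : 0 < SA) (hth : 0 ≤ th) (hlam : 0 < lam)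
    (t : ℕ) (hV : Real.sqrt (lam * th) < V) :
    (-SA * (Real.sqrt (lam * th) - V) ^ 2 +
        lam * (1 + ((t : ℝ) + 1) * SA * V) * (1 + (t : ℝ) * SA * V) ≤ 0) ↔
      (lam * ((t : ℝ) + 1) * (t : ℝ) * SA < 1 ∧ V ≥ vth SA th lam t) := by
  have hs : 0 ≤ √(lam * th) := Real.sqrt_nonneg _
  have hs2 : √(lam * th) ^ 2 = lam * th := Real.sq_sqrt (by positivity)
  set s := √(lam * th)
  set E := s * (2 * (t : ℝ) + 1) + lam * th * ((t : ℝ) + 1) * t * SA + lam / 4 + 1 / SA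
  have hR2 : (√lam * √E) ^ 2 = (2 * s + lam * (2 * (t : ℝ) + 1)) ^ 2 / 4
      + (1 - lam * ((t : ℝ) + 1) * t * SA) * (lam / SA - lam * th) := by
    rw [mul_pow, Real.sq_sqrt hlam.le, Real.sq_sqrt (by positivity)]
    exact mul_radicand_eq_discrim hSA.ne' hs2
  have hvth : vth SA th lam t = ((2 * s + lam * (2 * (t : ℝ) + 1)) / 2 + √lam * √E)
      / (1 - lam * ((t : ℝ) + 1) * t * SA) := by
    unfold vth; ring
  rw [neg_mul_sq_add_eq_neg_mul_quadratic hSA.ne' hs2, hvth, neg_mul, neg_nonpos,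
    mul_nonneg_iff_of_pos_left hSA, quadratic_nonneg_iff (by positivity) hs hV.le (by positivity)
      hR2 (quadratic_at_sqrt_neg hSA hlam hs hs2), sub_pos, ge_iff_le]
end

section
/- Fix reals S_A>0 and θ≥0, and define λ_th := 1/(√(1+1/S_A)+√θ)². Then for every λ>0 one has v_th(λ,0) > 1 if and only if λ > λ_th; moreover v_th(λ_th,0) = 1. -/
lemma vth_zero (SA th lam : ℝ) :
    vth SA th lam 0 = Real.sqrt (lam * th) + lam / 2 +
      Real.sqrt lam * Real.sqrt (Real.sqrt (lam * th) + lam / 4 + 1 / SA) := by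
  unfold vth; norm_num; ring_nf

lemma vth_mono (SA th : ℝ) (hSA : 0 < SA) (hth : 0 ≤ th) {x y : ℝ}
    (hx : 0 ≤ x) (hxy : x < y) : vth SA th x 0 < vth SA th y 0 := by
  rw [vth_zero, vth_zero]
  have hy : 0 ≤ y := le_trans hx hxy.le
  have h1 : Real.sqrt (x * th) ≤ Real.sqrt (y * th) :=
    Real.sqrt_le_sqrt (mul_le_mul_of_nonneg_right hxy.le hth)
  have hEle : Real.sqrt (x * th) + x / 4 + 1 / SA ≤ Real.sqrt (y * th) + y / 4 + 1 / SA := by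
    linarith
  have h2 : Real.sqrt (Real.sqrt (x * th) + x / 4 + 1 / SA) ≤
      Real.sqrt (Real.sqrt (y * th) + y / 4 + 1 / SA) := Real.sqrt_le_sqrt hEle
  have hF : 0 < Real.sqrt (Real.sqrt (y * th) + y / 4 + 1 / SA) := by
    apply Real.sqrt_pos.2
    have h := Real.sqrt_nonneg (y * th)
    have h' : 0 < 1 / SA := by positivity
    linarith
  have h3 : Real.sqrt x < Real.sqrt y := Real.sqrt_lt_sqrt hx hxy
  have h4 : Real.sqrt x * Real.sqrt (Real.sqrt (x * th) + x / 4 + 1 / SA) <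
      Real.sqrt y * Real.sqrt (Real.sqrt (y * th) + y / 4 + 1 / SA) := by
    calc Real.sqrt x * Real.sqrt (Real.sqrt (x * th) + x / 4 + 1 / SA)
        ≤ Real.sqrt x * Real.sqrt (Real.sqrt (y * th) + y / 4 + 1 / SA) :=
          mul_le_mul_of_nonneg_left h2 (Real.sqrt_nonneg x)
      _ < Real.sqrt y * Real.sqrt (Real.sqrt (y * th) + y / 4 + 1 / SA) :=
          mul_lt_mul_of_pos_right h3 hF
  linarith

lemma vth_val (SA th lamth : ℝ) (hSA : 0 < SA) (hth : 0 ≤ th)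
    (hlamth : lamth = 1 / (Real.sqrt (1 + 1 / SA) + Real.sqrt th) ^ 2) :
    vth SA th lamth 0 = 1 := by
  set s := Real.sqrt (1 + 1 / SA) with hs_def
  set r := Real.sqrt th with hr_def
  have h1SA : (0:ℝ) < 1 + 1 / SA := by positivity
  have hs2 : s ^ 2 = 1 + 1 / SA := Real.sq_sqrt h1SA.le
  have hr2 : r ^ 2 = th := Real.sq_sqrt hth
  have hs : 0 < s := Real.sqrt_pos.2 h1SA
  have hr : 0 ≤ r := Real.sqrt_nonneg th
  have hsr : 0 < s + r := by linarith
  set a := 1 / (s + r) with ha_def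
  have ha : 0 < a := by positivity
  have hasr : a * (s + r) = 1 := by rw [ha_def]; field_simp
  have hlam : lamth = a ^ 2 := by rw [hlamth, ha_def, div_pow, one_pow]
  have h1 : Real.sqrt (lamth * th) = a * r := by
    have : lamth * th = (a * r) ^ 2 := by rw [hlam, ← hr2]; ring
    rw [this, Real.sqrt_sq (by positivity)]
  have h2 : Real.sqrt lamth = a := by
    rw [hlam, Real.sqrt_sq ha.le]
  have hd : 0 < 1 / SA := by positivity
  have hs1 : 1 ≤ s := by nlinarith [sq_nonneg (s - 1), sq_nonneg (s + 1)]
  have ha1 : a ≤ 1 := by nlinarith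
  have h3 : Real.sqrt (lamth * th) + lamth / 4 + 1 / SA = (s - a / 2) ^ 2 := by
    rw [h1, hlam]; linear_combination hasr - hs2
  rw [vth_zero, h3, h2, h1, hlam, Real.sqrt_sq (by nlinarith)]
  linear_combination hasr

/-- with `λ_th := 1/(√(1+1/S_A)+√θ)²`, one has
`v_th(λ,0) > 1 ↔ λ > λ_th` for every `λ > 0`, and `v_th(λ_th,0) = 1`. -/
theorem stmt_2 (SA th lamth : ℝ) (hSA : 0 < SA) (hth : 0 ≤ th)
    (hlamth : lamth = 1 / (Real.sqrt (1 + 1 / SA) + Real.sqrt th) ^ 2) :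
    (∀ lam : ℝ, 0 < lam → (vth SA th lam 0 > 1 ↔ lam > lamth)) ∧
      vth SA th lamth 0 = 1 := by
  have hval := vth_val SA th lamth hSA hth hlamth
  have hlpos : 0 < lamth := by
    rw [hlamth]
    have h1SA : (0:ℝ) < 1 + 1 / SA := by positivity
    have hs : 0 < Real.sqrt (1 + 1 / SA) := Real.sqrt_pos.2 h1SA
    have hr : 0 ≤ Real.sqrt th := Real.sqrt_nonneg th
    positivity
  refine ⟨fun lam hlam => ⟨fun hgt => ?_, fun hgt => ?_⟩, hval⟩
  · by_contra hle
    push_neg at hle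
    rcases lt_or_eq_of_le hle with hlt | heq
    · have := vth_mono SA th hSA hth hlam.le hlt
      linarith
    · rw [heq] at hgt; linarith
  · have := vth_mono SA th hSA hth hlpos.le hgt
    linarith
end

section
/- Fix reals S_A>0, θ>0, λ with 0<λ≤λ_th, an integer B≥1, and a prior variance V∈(0,1] with V > v_th(λ,t*). Let t° := min{t*+1, B} and S_M° := (1/√(λθ) − 1/V)·S_A·V/(1+t°·S_A·V). Then (t°, S_M°) is a global minimizer of F over {0,1,…,B}×[0,∞). -/
/-!
Write `s = √(λθ)`. For fixed `t`, minimising `F(t, ·)` over `S_M ≥ 0` is a sum-of-squares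
computation: `F(t, S_M)` exceeds `G(t) = V + λt - S_A (V - s)² t / (1 + V S_A t)` by a square,
which vanishes exactly at `S_M°` (nonnegative because `s < V`). The increment `G(n) - G(n+1)`
has the sign of `S_A (V - s)² - λ (1 + V S_A n)(1 + V S_A (n+1))`. The condition `V > v_th(λ,t*)`
makes this positive at `n = t*`, hence for all `n ≤ t*`, while `λ n (n+1) S_A ≥ 1` makes it
nonpositive for `n > t*`. So `G` decreases up to `t* + 1` and increases afterwards, and its minimum
over `{0, …, B}` is at `min (t* + 1) B`.
-/

lemma apply_min_le_of_succ {β : Type*} [Preorder β] {f : ℕ → β} {m B t : ℕ}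
    (hdec : ∀ n < m, f (n + 1) ≤ f n) (hinc : ∀ n, m ≤ n → f n ≤ f (n + 1)) (ht : t ≤ B) :
    f (min m B) ≤ f t := by
  rcases le_total t (min m B) with h | h
  · refine antitoneOn_of_succ_le (s := Set.Iic m) Set.ordConnected_Iic (fun n _ _ hn => ?_)
      (h.trans (min_le_left m B)) (min_le_left m B) h
    rw [Order.succ_eq_add_one] at hn ⊢
    exact hdec n hn
  · rcases h.eq_or_lt with h | h
    · rw [h]
    · have hm : min m B = m := min_eq_left (by omega)
      rw [hm] at h ⊢
      exact Nat.rel_of_forall_rel_succ_of_le_of_le (· ≤ ·) hinc le_rfl h.le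

noncomputable def envelope (SA V s lam t : ℝ) : ℝ :=
  V + lam * t - SA * (V - s) ^ 2 * t / (1 + V * SA * t)

section Envelope

variable {SA th lam V s : ℝ}

lemma Fcoord_sub_envelope (hSA : 0 < SA) (hV : 0 ≤ V) (hs : s ^ 2 = lam * th) (t : ℕ)
    {SM : ℝ} (hSM : 0 ≤ SM) :
    Fcoord SA th lam V t SM - envelope SA V s lam t =
      t * (V * SA - s * (SA + SM * (1 + V * SA * t))) ^ 2 /
        ((SA + SM * (1 + V * SA * t)) * (1 + V * SA * t)) := by
  have hF : Fcoord SA th lam V t SM =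
      V / (1 + V * (t * SA * SM / (SA + SM))) + lam * t + s ^ 2 * t * SM := by
    rw [Fcoord, nuhat, hs]; ring
  have h1 : 0 < SA + SM := by linarith
  have h2 : 0 < 1 + V * SA * t := by positivity
  have h3 : 0 < SA + SM * (1 + V * SA * t) := by positivity
  have h4 : 0 < 1 + V * (t * SA * SM / (SA + SM)) := by positivity
  rw [hF, envelope]
  field_simp
  ring

lemma envelope_le_Fcoord (hSA : 0 < SA) (hV : 0 ≤ V) (hs : s ^ 2 = lam * th) (t : ℕ)
    {SM : ℝ} (hSM : 0 ≤ SM) : envelope SA V s lam t ≤ Fcoord SA th lam V t SM :=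
  sub_nonneg.1 (by rw [Fcoord_sub_envelope hSA hV hs t hSM]; positivity)

lemma Fcoord_eq_envelope (hSA : 0 < SA) (hs : s ^ 2 = lam * th) (hs0 : 0 < s) (hsV : s ≤ V)
    (t : ℕ) : Fcoord SA th lam V t ((1 / s - 1 / V) * SA * V / (1 + t * SA * V)) =
      envelope SA V s lam t := by
  have hV : 0 < V := hs0.trans_le hsV
  have hSM : 0 ≤ (1 / s - 1 / V) * SA * V / (1 + t * SA * V) := by
    have : 1 / V ≤ 1 / s := one_div_le_one_div_of_le hs0 hsV
    have : 0 ≤ 1 / s - 1 / V := by linarith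
    positivity
  rw [← sub_eq_zero, Fcoord_sub_envelope hSA hV.le hs t hSM]
  have : 0 < 1 + t * SA * V := by positivity
  field_simp
  ring

lemma envelope_sub_envelope_add_one (hSA : 0 < SA) (hV : 0 ≤ V) {n : ℝ} (hn : 0 ≤ n) :
    envelope SA V s lam n - envelope SA V s lam (n + 1) =
      (SA * (V - s) ^ 2 - lam * ((1 + V * SA * n) * (1 + V * SA * (n + 1)))) /
        ((1 + V * SA * n) * (1 + V * SA * (n + 1))) := by
  have h1 : 0 < 1 + V * SA * n := by positivity
  have h2 : 0 < 1 + V * SA * (n + 1) := by positivity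
  rw [envelope, envelope]
  field_simp
  ring

lemma envelope_add_one_le (hSA : 0 < SA) (hV : 0 ≤ V) (hlam : 0 ≤ lam) {n T : ℝ} (hn : 0 ≤ n)
    (hnT : n ≤ T) (h : lam * ((1 + V * SA * T) * (1 + V * SA * (T + 1))) ≤ SA * (V - s) ^ 2) :
    envelope SA V s lam (n + 1) ≤ envelope SA V s lam n := by
  have hmono : lam * ((1 + V * SA * n) * (1 + V * SA * (n + 1))) ≤
      lam * ((1 + V * SA * T) * (1 + V * SA * (T + 1))) := by
    have hT : 0 ≤ T := hn.trans hnT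
    gcongr
  refine sub_nonneg.1 ?_
  rw [envelope_sub_envelope_add_one hSA hV hn]
  exact div_nonneg (by linarith) (by positivity)

lemma envelope_le_add_one (hSA : 0 < SA) (hV : 0 ≤ V) (hlam : 0 ≤ lam) (hs : 0 ≤ s)
    (hsV : s ≤ V) {n : ℝ} (hn : 0 ≤ n) (h : 1 ≤ lam * n * (n + 1) * SA) :
    envelope SA V s lam n ≤ envelope SA V s lam (n + 1) := by
  have hsq : SA * (V - s) ^ 2 ≤ lam * ((1 + V * SA * n) * (1 + V * SA * (n + 1))) :=
    calc SA * (V - s) ^ 2 ≤ SA * V ^ 2 := by gcongr; linarith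
      _ ≤ lam * n * (n + 1) * SA * (SA * V ^ 2) := le_mul_of_one_le_left (by positivity) h
      _ ≤ lam * ((1 + V * SA * n) * (1 + V * SA * (n + 1))) := by
        have : 0 ≤ lam * (V * SA * (2 * n + 1)) := by positivity
        nlinarith
  refine sub_nonpos.1 ?_
  rw [envelope_sub_envelope_add_one hSA hV hn]
  exact div_nonpos_of_nonpos_of_nonneg (by linarith) (by positivity)

end Envelope

section Threshold

variable {SA th lam V : ℝ} {t : ℕ}

lemma sqrt_lt_of_vth_lt (hSA : 0 < SA) (hlam : 0 ≤ lam) (hth : 0 ≤ th)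
    (ht : lam * t * (t + 1) * SA < 1) (hV : vth SA th lam t < V) : √(lam * th) < V := by
  have hD : 0 < 1 - lam * ((t : ℝ) + 1) * t * SA := by linarith
  rw [vth, div_lt_iff₀ hD] at hV
  have hDle : 0 ≤ lam * ((t : ℝ) + 1) * t * SA := by positivity
  have : 0 ≤ lam * ((t : ℝ) + 1 / 2) := by positivity
  have : 0 ≤ √lam * √(√(lam * th) * (2 * (t : ℝ) + 1) +
      lam * th * ((t : ℝ) + 1) * t * SA + lam / 4 + 1 / SA) := by positivity
  have : 0 ≤ √(lam * th) := Real.sqrt_nonneg _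
  nlinarith

lemma lam_mul_lt_of_vth_lt (hSA : 0 < SA) (hlam : 0 ≤ lam) (hth : 0 ≤ th)
    (ht : lam * t * (t + 1) * SA < 1) (hV : vth SA th lam t < V) :
    lam * ((1 + V * SA * t) * (1 + V * SA * (t + 1))) < SA * (V - √(lam * th)) ^ 2 := by
  have hD : 0 < 1 - lam * ((t : ℝ) + 1) * t * SA := by linarith
  rw [vth, div_lt_iff₀ hD] at hV
  set s := √(lam * th)
  set D := 1 - lam * ((t : ℝ) + 1) * t * SA with hD_def
  set N := s + lam * ((t : ℝ) + 1 / 2)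
  set R := s * (2 * (t : ℝ) + 1) + lam * th * ((t : ℝ) + 1) * t * SA + lam / 4 + 1 / SA
    with hR_def
  have hs : s ^ 2 = lam * th := Real.sq_sqrt (by positivity)
  have hR : 0 ≤ R := by positivity
  have hroot : lam * R < (D * V - N) ^ 2 := by
    have hsq : (√lam * √R) ^ 2 = lam * R := by
      rw [mul_pow, Real.sq_sqrt hlam, Real.sq_sqrt hR]
    rw [← hsq]
    exact pow_lt_pow_left₀ (by linarith) (by positivity) two_ne_zero
  -- `vth` is the larger root in `V` of the right-hand side, a quadratic completed to a square.
  have hquad : D * (SA * (V - s) ^ 2 - lam * ((1 + V * SA * t) * (1 + V * SA * (t + 1)))) =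
      SA * ((D * V - N) ^ 2 - lam * R) := by
    rw [hR_def, hD_def, ← hs]
    field_simp
    ring
  have : 0 < D * (SA * (V - s) ^ 2 - lam * ((1 + V * SA * t) * (1 + V * SA * (t + 1)))) := by
    rw [hquad]; exact mul_pos hSA (by linarith)
  linarith [(mul_pos_iff_of_pos_left hD).1 this]

end Threshold

theorem stmt_3_general (SA th lam V : ℝ) (hSA : 0 < SA) (hth : 0 < th)
    (hlam : 0 < lam)
    (B : ℕ)
    (tstar : ℕ)
    (htstar1 : lam * (tstar : ℝ) * ((tstar : ℝ) + 1) * SA < 1)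
    (htstar2 : ∀ t : ℕ, lam * (t : ℝ) * ((t : ℝ) + 1) * SA < 1 → t ≤ tstar)
    (hVth : V > vth SA th lam tstar)
    (tcirc : ℕ) (htcirc : tcirc = min (tstar + 1) B)
    (SMcirc : ℝ)
    (hSMcirc : SMcirc =
      (1 / Real.sqrt (lam * th) - 1 / V) * SA * V / (1 + (tcirc : ℝ) * SA * V)) :
    ∀ t : ℕ, t ≤ B → ∀ SM : ℝ, 0 ≤ SM →
      Fcoord SA th lam V t SM ≥ Fcoord SA th lam V tcirc SMcirc := by
  intro t htB SM hSM
  set s := √(lam * th)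
  have hs : s ^ 2 = lam * th := Real.sq_sqrt (by positivity)
  have hs0 : 0 < s := Real.sqrt_pos.2 (by positivity)
  have hsV : s < V := sqrt_lt_of_vth_lt hSA hlam.le hth.le htstar1 hVth
  have hV : 0 ≤ V := hs0.le.trans hsV.le
  have hdec : ∀ n < tstar + 1,
      envelope SA V s lam (n + 1 : ℕ) ≤ envelope SA V s lam n := fun n hn => by
    push_cast
    exact envelope_add_one_le hSA hV hlam.le n.cast_nonneg
      (by exact_mod_cast Nat.le_of_lt_succ hn)
      (lam_mul_lt_of_vth_lt hSA hlam.le hth.le htstar1 hVth).le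
  have hinc : ∀ n, tstar + 1 ≤ n →
      envelope SA V s lam n ≤ envelope SA V s lam (n + 1 : ℕ) := fun n hn => by
    push_cast
    refine envelope_le_add_one hSA hV hlam.le hs0.le hsV.le n.cast_nonneg (not_lt.1 fun h => ?_)
    exact absurd (htstar2 n h) (by omega)
  rw [ge_iff_le, hSMcirc, Fcoord_eq_envelope hSA hs hs0 hsV.le, htcirc]
  exact (apply_min_le_of_succ (f := fun n : ℕ => envelope SA V s lam n) hdec hinc htB).trans
    (envelope_le_Fcoord hSA hV hs t hSM)

/-- if `V > v_th(λ,t*)`, then `(min{t*+1,B}, S_M°)` globally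
minimizes the coordinated myopic cost over `{0,…,B}×[0,∞)`. -/
theorem stmt_3 (SA th lam V lamth : ℝ) (hSA : 0 < SA) (hth : 0 < th)
    (hlam : 0 < lam)
    (hlamth : lamth = 1 / (Real.sqrt (1 + 1 / SA) + Real.sqrt th) ^ 2)
    (hle : lam ≤ lamth)
    (B : ℕ) (hB : 1 ≤ B) (hV0 : 0 < V) (hV1 : V ≤ 1)
    (tstar : ℕ)
    (htstar1 : lam * (tstar : ℝ) * ((tstar : ℝ) + 1) * SA < 1)
    (htstar2 : ∀ t : ℕ, lam * (t : ℝ) * ((t : ℝ) + 1) * SA < 1 → t ≤ tstar)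
    (hVth : V > vth SA th lam tstar)
    (tcirc : ℕ) (htcirc : tcirc = min (tstar + 1) B)
    (SMcirc : ℝ)
    (hSMcirc : SMcirc =
      (1 / Real.sqrt (lam * th) - 1 / V) * SA * V / (1 + (tcirc : ℝ) * SA * V)) :
    ∀ t : ℕ, t ≤ B → ∀ SM : ℝ, 0 ≤ SM →
      Fcoord SA th lam V t SM ≥ Fcoord SA th lam V tcirc SMcirc :=
  stmt_3_general SA th lam V hSA hth hlam B tstar htstar1 htstar2 hVth tcirc htcirc SMcirc hSMcirc
end

section
/- Fix reals S_A>0, θ>0, λ with 0<λ≤λ_th, an integer B≥1, a prior variance V∈(0,1], and an integer t̂ with 0 ≤ t̂ ≤ t*, where by convention v_th(λ,−1) := 0. If v_th(λ,t̂−1) < V < v_th(λ,t̂), then, setting t° := min{t̂, B} and S_M° := max(1/√(λθ) − 1/V, 0)·S_A·V/(1+t°·S_A·V), the pair (t°, S_M°) is a global minimizer of F over {0,1,…,B}×[0,∞). -/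
/-!
Write `s = √(λθ)` and `G(t) = V(1 + s t S_A)² / (1 + V t S_A) + λt - s² t S_A`. For fixed `t`,
`F(t, S_M) - G(t)` is a nonnegative multiple of a square which, when `s < V`, vanishes at
`S_M = S_M°`. The increments of `G` are nondecreasing (its second difference is
`2 V S_A² (V - s)² / (…)`), and `G(t + 1) - G(t)` has the sign of a concave quadratic in `V`
that is positive at `V = s` and has larger root `v_th(λ,t)`. Hence `v_th(λ,t̂-1) < V < v_th(λ,t̂)`
makes `t̂` a minimizer of `G` on `ℕ` and `min t̂ B` one on `{0,…,B}`. If `V ≤ s`, then `t̂ = 0`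
because `s < v_th(λ,t)` for all `t`, and `F(t, S_M) ≥ V = F(0, 0)` because
`V² · (t S_A S_M / (S_A + S_M)) ≤ λθ t S_M`.
-/

open Real

theorem antitoneOn_nat_Iic_of_succ_le {α : Type*} [Preorder α] {f : ℕ → α} {a : ℕ}
    (hf : ∀ n < a, f (n + 1) ≤ f n) : AntitoneOn f (Set.Iic a) := by
  intro b _ c hc hbc
  induction c, hbc using Nat.le_induction with
  | base => exact le_rfl
  | succ c _ ih => exact (hf c hc).trans (ih (Nat.le_of_succ_le hc))

-- By truncated subtraction, `hdown` is trivial when `a = 0`.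
theorem isMinOn_Iic_min_of_monotone_sub {G : ℕ → ℝ} (hG : Monotone fun k => G (k + 1) - G k)
    {a : ℕ} (hup : G a ≤ G (a + 1)) (hdown : G a ≤ G (a - 1)) (B : ℕ) :
    IsMinOn G (Set.Iic B) (min a B) := by
  have hinc : MonotoneOn G {x | a ≤ x} := monotoneOn_nat_Ici_of_le_succ fun n hn =>
    sub_nonneg.1 ((sub_nonneg.2 hup).trans (hG hn))
  have hdec : AntitoneOn G (Set.Iic a) := antitoneOn_nat_Iic_of_succ_le fun n hn => by
    have : G (n + 1) - G n ≤ G (a - 1 + 1) - G (a - 1) := hG (Nat.le_sub_one_of_lt hn)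
    rw [Nat.sub_add_cancel (Nat.one_le_of_lt hn)] at this
    linarith
  intro t (ht : t ≤ B)
  rcases le_total a B with hab | hba
  · rw [min_eq_left hab]
    rcases le_total a t with hat | hta
    · exact hinc (le_refl a) hat hat
    · exact hdec hta Set.self_mem_Iic hta
  · rw [min_eq_right hba]
    exact hdec (ht.trans hba) hba ht

/-- The value of `Fcoord … t` at its optimal `S_M` when `s = √(λθ) < V`. -/
noncomputable def Fopt (SA lam V s T : ℝ) : ℝ :=
  V * (1 + s * T * SA) ^ 2 / (1 + V * T * SA) + lam * T - s ^ 2 * T * SA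

/-- Up to the factor `SA`, the numerator of `Fopt (T + 1) - Fopt T`; `vth … T` is its larger
root in `V`. -/
noncomputable def stepQuad (SA lam s T V : ℝ) : ℝ :=
  -(1 - lam * (T + 1) * T * SA) * V ^ 2 + 2 * (s + lam * (T + 1 / 2)) * V + (lam / SA - s ^ 2)

section

variable {SA th lam V : ℝ}

theorem Fcoord_sub_Fopt {s S : ℝ} (hSA : 0 < SA) (hV : 0 < V) (hs : s ^ 2 = lam * th)
    (t : ℕ) (hS : 0 ≤ S) :
    Fcoord SA th lam V t S - Fopt SA lam V s t =
      t * (V * SA - s * (SA + S + V * t * SA * S)) ^ 2 /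
        ((SA + S + V * t * SA * S) * (1 + V * t * SA)) := by
  have h1 : 0 < SA + S := by positivity
  have h2 : 0 < SA + S + V * t * SA * S := by positivity
  have h3 : 0 < 1 + V * t * SA := by positivity
  have h4 : 1 + V * (t * SA * S / (SA + S)) = (SA + S + V * t * SA * S) / (SA + S) := by
    field_simp
  have h5 : lam * t * (1 + th * S) = lam * t + s ^ 2 * t * S := by
    linear_combination (-(t * S)) * hs
  rw [Fcoord, nuhat, h4, h5, Fopt]
  field_simp
  ring

theorem Fopt_le_Fcoord (hSA : 0 < SA) (hV : 0 < V) {s : ℝ} (hs : s ^ 2 = lam * th) (t : ℕ)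
    {S : ℝ} (hS : 0 ≤ S) : Fopt SA lam V s t ≤ Fcoord SA th lam V t S := by
  rw [← sub_nonneg, Fcoord_sub_Fopt hSA hV hs t hS]
  positivity

theorem Fcoord_eq_Fopt (hSA : 0 < SA) (hV : 0 < V) {s : ℝ} (hs0 : 0 < s) (hsV : s ≤ V)
    (hs : s ^ 2 = lam * th) (t : ℕ) :
    Fcoord SA th lam V t ((1 / s - 1 / V) * SA * V / (1 + t * SA * V)) = Fopt SA lam V s t := by
  have hS : 0 ≤ (1 / s - 1 / V) * SA * V / (1 + t * SA * V) := by
    have := one_div_le_one_div_of_le hs0 hsV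
    have : 0 ≤ 1 / s - 1 / V := by linarith
    positivity
  rw [← sub_eq_zero, Fcoord_sub_Fopt hSA hV hs t hS]
  have h1 : 0 < 1 + t * SA * V := by positivity
  have : V * SA - s * (SA + (1 / s - 1 / V) * SA * V / (1 + t * SA * V) +
      V * t * SA * ((1 / s - 1 / V) * SA * V / (1 + t * SA * V))) = 0 := by
    field_simp; ring
  rw [this]; simp

theorem le_Fcoord_of_sq_le (hSA : 0 < SA) (hV : 0 < V) (hlam : 0 ≤ lam) (hVs : V ^ 2 ≤ lam * th)
    (t : ℕ) {S : ℝ} (hS : 0 ≤ S) : V ≤ Fcoord SA th lam V t S := by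
  set L := t * SA * S / (SA + S)
  have hL0 : 0 ≤ L := by positivity
  have hLt : L ≤ t * S := by
    rw [div_le_iff₀ (by positivity)]
    nlinarith [mul_nonneg (Nat.cast_nonneg t : (0:ℝ) ≤ t) (mul_nonneg hS hS)]
  have h1 : V - V ^ 2 * L ≤ V / (1 + V * L) := by
    rw [le_div_iff₀ (by positivity)]
    nlinarith [mul_nonneg (pow_nonneg hV.le 3) (sq_nonneg L)]
  have h2 : V ^ 2 * L ≤ lam * t * (1 + th * S) := by
    calc V ^ 2 * L ≤ lam * th * (t * S) := mul_le_mul hVs hLt hL0 (by nlinarith)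
      _ ≤ lam * t * (1 + th * S) := by nlinarith [mul_nonneg hlam (Nat.cast_nonneg t : (0:ℝ) ≤ t)]
  rw [Fcoord, nuhat]
  linarith

theorem Fopt_succ_sub_Fopt (s : ℝ) (hSA : 0 < SA) (hV : 0 < V) {T : ℝ} (hT : 0 ≤ T) :
    Fopt SA lam V s (T + 1) - Fopt SA lam V s T =
      SA * stepQuad SA lam s T V / ((1 + V * T * SA) * (1 + V * (T + 1) * SA)) := by
  have h0 : 0 < 1 + V * T * SA := by positivity
  have h1 : 0 < 1 + V * (T + 1) * SA := by positivity
  rw [Fopt, Fopt, stepQuad]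
  field_simp
  ring

theorem Fopt_second_diff (s : ℝ) (hSA : 0 < SA) (hV : 0 < V) {T : ℝ} (hT : 0 ≤ T) :
    (Fopt SA lam V s (T + 2) - Fopt SA lam V s (T + 1)) -
        (Fopt SA lam V s (T + 1) - Fopt SA lam V s T) =
      2 * V * (SA * (V - s)) ^ 2 /
        ((1 + V * T * SA) * (1 + V * (T + 1) * SA) * (1 + V * (T + 2) * SA)) := by
  have h0 : 0 < 1 + V * T * SA := by positivity
  have h1 : 0 < 1 + V * (T + 1) * SA := by positivity
  have h2 : 0 < 1 + V * (T + 2) * SA := by positivity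
  rw [Fopt, Fopt, Fopt]
  field_simp
  ring

theorem vth_mul_one_sub (k : ℕ) (hD : lam * (k + 1) * k * SA < 1) :
    vth SA th lam k * (1 - lam * (k + 1) * k * SA) =
      √(lam * th) + lam * (k + 1 / 2) +
        √lam * √(√(lam * th) * (2 * k + 1) + lam * th * (k + 1) * k * SA + lam / 4 + 1 / SA) :=
  div_mul_cancel₀ _ (sub_pos.2 hD).ne'

theorem stepQuad_vth (hSA : 0 < SA) (hlam : 0 ≤ lam) (hth : 0 ≤ th) (k : ℕ)
    (hD : lam * (k + 1) * k * SA < 1) :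
    stepQuad SA lam √(lam * th) k (vth SA th lam k) = 0 := by
  have hR : 0 ≤ √(lam * th) * (2 * k + 1) + lam * th * (k + 1) * k * SA + lam / 4 + 1 / SA := by
    positivity
  have hs := sq_sqrt (mul_nonneg hlam hth)
  have key := vth_mul_one_sub (th := th) k hD
  refine (mul_eq_zero.1 ?_).resolve_left (sub_pos.2 hD).ne'
  -- With `D = 1 - λ(k+1)k S_A`, `m = √(λθ) + λ(k+1/2)` and `R` the radicand in `vth`:
  -- `D · stepQuad(w) = λR - (D w - m)²`, while `D · vth = m + √(λR)`.
  calc (1 - lam * (k + 1) * k * SA) * stepQuad SA lam √(lam * th) k (vth SA th lam k)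
      = lam * (√(lam * th) * (2 * k + 1) + lam * th * (k + 1) * k * SA + lam / 4 + 1 / SA) -
          (vth SA th lam k * (1 - lam * (k + 1) * k * SA) -
            (√(lam * th) + lam * (k + 1 / 2))) ^ 2 := by
        rw [stepQuad]; field_simp; linear_combination 16 * lam * k * (k + 1) * SA ^ 2 * hs
    _ = 0 := by
        rw [key, add_sub_cancel_left, mul_pow, sq_sqrt hlam, sq_sqrt hR, sub_self]

theorem stepQuad_eq_mul (hSA : 0 < SA) (hlam : 0 ≤ lam) (hth : 0 ≤ th) (k : ℕ)
    (hD : lam * (k + 1) * k * SA < 1) (V : ℝ) :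
    stepQuad SA lam √(lam * th) k V = (vth SA th lam k - V) *
      ((1 - lam * (k + 1) * k * SA) * (vth SA th lam k + V) -
        2 * (√(lam * th) + lam * (k + 1 / 2))) := by
  have hroot := stepQuad_vth hSA hlam hth k hD
  rw [stepQuad] at hroot ⊢
  linear_combination hroot

theorem sqrt_lt_vth (hlam : 0 < lam) (hSA : 0 ≤ SA) (k : ℕ) (hD : lam * (k + 1) * k * SA < 1) :
    √(lam * th) < vth SA th lam k := by
  have hD0 : 0 < 1 - lam * (k + 1) * k * SA := sub_pos.2 hD
  have hD1 : 1 - lam * (k + 1) * k * SA ≤ 1 := by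
    have : 0 ≤ lam * (k + 1) * k * SA := by positivity
    linarith
  have hlt : √(lam * th) < vth SA th lam k * (1 - lam * (k + 1) * k * SA) := by
    rw [vth_mul_one_sub k hD]
    have : 0 < lam * (k + 1 / 2) := by positivity
    have : 0 ≤ √lam *
        √(√(lam * th) * (2 * k + 1) + lam * th * (k + 1) * k * SA + lam / 4 + 1 / SA) := by
      positivity
    linarith
  have hv : 0 < vth SA th lam k := (pos_of_mul_pos_left ((sqrt_nonneg _).trans_lt hlt) hD0.le)
  exact hlt.trans_le (mul_le_of_le_one_right hv.le hD1)

theorem stepQuad_cofactor_pos (hSA : 0 < SA) (hlam : 0 < lam) (hth : 0 ≤ th) (k : ℕ)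
    (hD : lam * (k + 1) * k * SA < 1) (hV : √(lam * th) ≤ V) :
    0 < (1 - lam * (k + 1) * k * SA) * (vth SA th lam k + V) -
      2 * (√(lam * th) + lam * (k + 1 / 2)) := by
  set s := √(lam * th)
  have hpos : 0 < stepQuad SA lam s k s := by
    have : stepQuad SA lam s k s =
        lam * (k + 1) * k * SA * s ^ 2 + lam * (2 * k + 1) * s + lam / SA := by
      rw [stepQuad]; ring
    rw [this]; positivity
  rw [stepQuad_eq_mul hSA hlam.le hth k hD] at hpos
  have hcof := pos_of_mul_pos_right hpos (sub_pos.2 (sqrt_lt_vth hlam hSA.le k hD)).le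
  have : (1 - lam * (k + 1) * k * SA) * s ≤ (1 - lam * (k + 1) * k * SA) * V :=
    mul_le_mul_of_nonneg_left hV (sub_pos.2 hD).le
  linarith

theorem Fopt_le_Fopt_succ (hSA : 0 < SA) (hlam : 0 < lam) (hth : 0 ≤ th) (hV : 0 < V) (k : ℕ)
    (hD : lam * (k + 1) * k * SA < 1) (hsV : √(lam * th) ≤ V) (hVv : V ≤ vth SA th lam k) :
    Fopt SA lam V √(lam * th) k ≤ Fopt SA lam V √(lam * th) (k + 1 : ℕ) := by
  rw [← sub_nonneg, Nat.cast_succ, Fopt_succ_sub_Fopt _ hSA hV k.cast_nonneg,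
    stepQuad_eq_mul hSA hlam.le hth k hD]
  have := stepQuad_cofactor_pos hSA hlam hth k hD hsV
  have := sub_nonneg.2 hVv
  positivity

theorem Fopt_succ_le_Fopt (hSA : 0 < SA) (hlam : 0 < lam) (hth : 0 ≤ th) (hV : 0 < V) (k : ℕ)
    (hD : lam * (k + 1) * k * SA < 1) (hvV : vth SA th lam k ≤ V) :
    Fopt SA lam V √(lam * th) (k + 1 : ℕ) ≤ Fopt SA lam V √(lam * th) k := by
  rw [← sub_nonpos, Nat.cast_succ, Fopt_succ_sub_Fopt _ hSA hV k.cast_nonneg,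
    stepQuad_eq_mul hSA hlam.le hth k hD]
  have hcof := stepQuad_cofactor_pos hSA hlam hth k hD ((sqrt_lt_vth hlam hSA.le k hD).le.trans hvV)
  refine div_nonpos_of_nonpos_of_nonneg (mul_nonpos_of_nonneg_of_nonpos hSA.le ?_) (by positivity)
  exact mul_nonpos_of_nonpos_of_nonneg (sub_nonpos.2 hvV) hcof.le

theorem monotone_Fopt_succ_sub (s : ℝ) (hSA : 0 < SA) (hV : 0 < V) :
    Monotone fun k : ℕ => Fopt SA lam V s (k + 1 : ℕ) - Fopt SA lam V s k := by
  refine monotone_nat_of_le_succ fun k => sub_nonneg.1 ?_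
  have h := Fopt_second_diff (lam := lam) s hSA hV k.cast_nonneg
  push_cast
  rw [add_assoc, one_add_one_eq_two, h]
  positivity

end

theorem stmt_4_general (SA th lam V : ℝ) (hSA : 0 < SA) (hth : 0 < th)
    (hlam : 0 < lam)
    (B : ℕ) (hV0 : 0 < V)
    (tstar : ℕ)
    (htstar1 : lam * (tstar : ℝ) * ((tstar : ℝ) + 1) * SA < 1)
    (that : ℕ) (hthat : that ≤ tstar)
    (hleft : (if that = 0 then (0 : ℝ) else vth SA th lam (that - 1)) < V)
    (hright : V < vth SA th lam that)
    (tcirc : ℕ) (htcirc : tcirc = min that B)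
    (SMcirc : ℝ)
    (hSMcirc : SMcirc =
      max (1 / Real.sqrt (lam * th) - 1 / V) 0 * SA * V / (1 + (tcirc : ℝ) * SA * V)) :
    ∀ t : ℕ, t ≤ B → ∀ SM : ℝ, 0 ≤ SM →
      Fcoord SA th lam V t SM ≥ Fcoord SA th lam V tcirc SMcirc := by
  intro t ht SM hSM
  subst htcirc hSMcirc
  set s := √(lam * th)
  have hs0 : 0 < s := sqrt_pos.2 (by positivity)
  have hs : s ^ 2 = lam * th := sq_sqrt (by positivity)
  have hD : ∀ k ≤ that, lam * (k + 1) * k * SA < 1 := fun k hk => by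
    have : (k : ℝ) ≤ tstar := by exact_mod_cast hk.trans hthat
    calc lam * (k + 1) * k * SA ≤ lam * (tstar + 1) * tstar * SA := by gcongr
      _ = lam * tstar * (tstar + 1) * SA := by ring
      _ < 1 := htstar1
  rcases le_or_gt V s with hVs | hsV
  · have hthat0 : that = 0 := by
      by_contra h
      rw [if_neg h] at hleft
      exact (sqrt_lt_vth hlam hSA.le _ (hD _ (Nat.sub_le _ _))).not_ge (hleft.le.trans hVs)
    rw [max_eq_right (sub_nonpos.2 (one_div_le_one_div_of_le hV0 hVs)), hthat0, Nat.zero_min]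
    simpa [Fcoord, nuhat] using
      le_Fcoord_of_sq_le hSA hV0 hlam.le (hs ▸ pow_le_pow_left₀ hV0.le hVs 2) t hSM
  · rw [max_eq_left (sub_nonneg.2 (one_div_le_one_div_of_le hs0 hsV.le)),
      ge_iff_le, Fcoord_eq_Fopt hSA hV0 hs0 hsV.le hs]
    have hup := Fopt_le_Fopt_succ hSA hlam hth.le hV0 that (hD that le_rfl) hsV.le hright.le
    have hdown : Fopt SA lam V s that ≤ Fopt SA lam V s (that - 1 : ℕ) := by
      rcases that with _ | k
      · exact le_rfl
      · exact Fopt_succ_le_Fopt hSA hlam hth.le hV0 k (hD k (Nat.le_succ k)) hleft.le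
    exact ((isMinOn_Iic_min_of_monotone_sub (G := fun k : ℕ => Fopt SA lam V s k)
      (monotone_Fopt_succ_sub s hSA hV0) hup hdown B) ht).trans (Fopt_le_Fcoord hSA hV0 hs t hSM)

/-- if `v_th(λ,t̂−1) < V < v_th(λ,t̂)` (with `v_th(λ,−1) := 0`)
for some `0 ≤ t̂ ≤ t*`, then `(min{t̂,B}, S_M°)` globally minimizes the
coordinated myopic cost over `{0,…,B}×[0,∞)`. -/
theorem stmt_4 (SA th lam V lamth : ℝ) (hSA : 0 < SA) (hth : 0 < th)
    (hlam : 0 < lam)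
    (hlamth : lamth = 1 / (Real.sqrt (1 + 1 / SA) + Real.sqrt th) ^ 2)
    (hle : lam ≤ lamth)
    (B : ℕ) (hB : 1 ≤ B) (hV0 : 0 < V) (hV1 : V ≤ 1)
    (tstar : ℕ)
    (htstar1 : lam * (tstar : ℝ) * ((tstar : ℝ) + 1) * SA < 1)
    (htstar2 : ∀ t : ℕ, lam * (t : ℝ) * ((t : ℝ) + 1) * SA < 1 → t ≤ tstar)
    (that : ℕ) (hthat : that ≤ tstar)
    (hleft : (if that = 0 then (0 : ℝ) else vth SA th lam (that - 1)) < V)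
    (hright : V < vth SA th lam that)
    (tcirc : ℕ) (htcirc : tcirc = min that B)
    (SMcirc : ℝ)
    (hSMcirc : SMcirc =
      max (1 / Real.sqrt (lam * th) - 1 / V) 0 * SA * V / (1 + (tcirc : ℝ) * SA * V)) :
    ∀ t : ℕ, t ≤ B → ∀ SM : ℝ, 0 ≤ SM →
      Fcoord SA th lam V t SM ≥ Fcoord SA th lam V tcirc SMcirc :=
  stmt_4_general SA th lam V hSA hth hlam B hV0 tstar htstar1 that hthat hleft hright tcirc htcirc
    SMcirc hSMcirc
end

section
/- For every real α∈(0,1), every integer j≥1, and every real x∈[0,1]: j·α^{j}·(1−α)·x² ≤ (1−α^{j})·(1−α^{j}·(1−x))·(1−α^{j+1}·(1−x)). -/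
lemma key_aux (alpha : ℝ) (h0 : 0 < alpha) (h1 : alpha < 1) :
    ∀ j : ℕ, (j : ℝ) * alpha ^ j * (1 - alpha) ≤ 1 - alpha ^ j := by
  intro j
  induction j with
  | zero => simp
  | succ n ih =>
    have hpow : 0 < alpha ^ n := pow_pos h0 n
    have hle1 : alpha ^ n ≤ 1 := pow_le_one₀ h0.le h1.le
    have hmul := mul_le_mul_of_nonneg_left ih h0.le
    push_cast
    ring_nf
    ring_nf at hmul
    have h2 : alpha * alpha ^ n ≤ 1 := by nlinarith
    nlinarith [mul_nonneg (sub_nonneg.mpr h2) (sub_nonneg.mpr h1.le)]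

/-- for `α ∈ (0,1)`, `j ≥ 1`, `x ∈ [0,1]`:
`j·α^j·(1−α)·x² ≤ (1−α^j)·(1−α^j·(1−x))·(1−α^{j+1}·(1−x))`. -/
theorem stmt_11 (alpha x : ℝ) (halpha : alpha ∈ Set.Ioo (0 : ℝ) 1)
    (j : ℕ) (hj : 1 ≤ j) (hx : x ∈ Set.Icc (0 : ℝ) 1) :
    (j : ℝ) * alpha ^ j * (1 - alpha) * x ^ 2 ≤
      (1 - alpha ^ j) * (1 - alpha ^ j * (1 - x)) * (1 - alpha ^ (j + 1) * (1 - x)) := by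
  obtain ⟨h0, h1⟩ := halpha
  obtain ⟨hx0, hx1⟩ := hx
  have hkey := key_aux alpha h0 h1 j
  have hj1 : alpha ^ j ≤ 1 := pow_le_one₀ h0.le h1.le
  have hj2 : alpha ^ (j + 1) ≤ 1 := pow_le_one₀ h0.le h1.le
  have hjp : 0 < alpha ^ j := pow_pos h0 j
  have hjp2 : 0 < alpha ^ (j + 1) := pow_pos h0 (j + 1)
  have hA : x ≤ 1 - alpha ^ j * (1 - x) := by nlinarith
  have hB : x ≤ 1 - alpha ^ (j + 1) * (1 - x) := by nlinarith
  have hC : (0:ℝ) ≤ 1 - alpha ^ j := by linarith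
  have hL : (j : ℝ) * alpha ^ j * (1 - alpha) * x ^ 2 ≤ (1 - alpha ^ j) * x ^ 2 := by
    nlinarith [sq_nonneg x]
  have huv : x ^ 2 ≤ (1 - alpha ^ j * (1 - x)) * (1 - alpha ^ (j + 1) * (1 - x)) := by
    calc x ^ 2 = x * x := sq x
      _ ≤ _ := mul_le_mul hA hB hx0 (hx0.trans hA)
  calc (j : ℝ) * alpha ^ j * (1 - alpha) * x ^ 2 ≤ (1 - alpha ^ j) * x ^ 2 := hL
    _ ≤ (1 - alpha ^ j) * ((1 - alpha ^ j * (1 - x)) * (1 - alpha ^ (j + 1) * (1 - x))) :=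
        mul_le_mul_of_nonneg_left huv hC
    _ = (1 - alpha ^ j) * (1 - alpha ^ j * (1 - x)) * (1 - alpha ^ (j + 1) * (1 - x)) := by ring
end

section
/- For every real α∈(0,1), every integer J≥1, and every real V̂∈(0,1), the function p₀ ↦ 1 − (1 − α^{J}·[1−(1−α)·(1−p₀)])·(1−V̂) / ((J+1−p₀)·(1−α)) is strictly decreasing on [0,1]. -/
/-! The function is `1 - K · g(p₀)` with `K = (1 - V̂)/(1 - α) > 0` and `g` the Möbius map
`p ↦ (a - b p)/(c - p)`, where `a = 1 - α^(J+1)`, `b = α^J (1 - α)`, `c = J + 1`.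
Such a map is increasing on `p < c` exactly when `b c < a`, and here `a - b c > 0` because
`1 - α^(J+1) = (1 - α) ∑_{i ≤ J} α^i` and each `α^i` is at least `α^J`, strictly so for `i = 0`. -/

open Finset in
theorem succ_mul_pow_mul_one_sub_lt {a : ℝ} (ha₀ : 0 ≤ a) (ha₁ : a < 1) {n : ℕ} (hn : 0 < n) :
    ((n : ℝ) + 1) * a ^ n * (1 - a) < 1 - a ^ (n + 1) := by
  have hsum : ((n : ℝ) + 1) * a ^ n < ∑ i ∈ range (n + 1), a ^ i := by
    have hconst : ∑ _i ∈ range (n + 1), a ^ n = ((n : ℝ) + 1) * a ^ n := by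
      simp [sum_const, card_range]
    rw [← hconst]
    refine sum_lt_sum (fun i hi => pow_le_pow_of_le_one ha₀ ha₁.le (mem_range_succ_iff.mp hi))
      ⟨0, by simp, by simpa using pow_lt_one₀ ha₀ ha₁ hn.ne'⟩
  rw [← geom_sum_mul_neg]
  exact mul_lt_mul_of_pos_right hsum (sub_pos.mpr ha₁)

theorem strictMonoOn_sub_mul_div_sub {a b c : ℝ} (h : b * c < a) :
    StrictMonoOn (fun p => (a - b * p) / (c - p)) (Set.Iio c) := by
  intro x hx y hy hxy
  have hx' : 0 < c - x := sub_pos.mpr hx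
  have hy' : 0 < c - y := sub_pos.mpr hy
  rw [div_lt_div_iff₀ hx' hy']
  nlinarith [mul_pos (sub_pos.mpr h) (sub_pos.mpr hxy)]

/-- the average long-term MSE of the myopic policy at the
boundary multiplier, as a function of the randomization probability `p₀`, is
strictly decreasing on `[0,1]`. -/
theorem stmt_12 (alpha Vh : ℝ) (halpha : alpha ∈ Set.Ioo (0 : ℝ) 1)
    (J : ℕ) (hJ : 1 ≤ J) (hVh : Vh ∈ Set.Ioo (0 : ℝ) 1) :
    StrictAntiOn
      (fun p0 : ℝ =>
        1 - (1 - alpha ^ J * (1 - (1 - alpha) * (1 - p0))) * (1 - Vh) /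
          (((J : ℝ) + 1 - p0) * (1 - alpha)))
      (Set.Icc 0 1) := by
  obtain ⟨ha₀, ha₁⟩ := halpha
  have hK : 0 < (1 - Vh) / (1 - alpha) := div_pos (sub_pos.mpr hVh.2) (sub_pos.mpr ha₁)
  have hg : StrictMonoOn
      (fun p => (1 - alpha ^ (J + 1) - alpha ^ J * (1 - alpha) * p) / ((J : ℝ) + 1 - p))
      (Set.Icc 0 1) := by
    refine (strictMonoOn_sub_mul_div_sub ?_).mono fun p hp => ?_
    · linarith [succ_mul_pow_mul_one_sub_lt ha₀.le ha₁ hJ]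
    · have : (1 : ℝ) ≤ J := by exact_mod_cast hJ
      exact show p < (J : ℝ) + 1 by linarith [hp.2]
  intro x hx y hy hxy
  simp only [mul_div_mul_comm _ (1 - Vh)]
  have hnum : ∀ p : ℝ, 1 - alpha ^ J * (1 - (1 - alpha) * (1 - p)) =
      1 - alpha ^ (J + 1) - alpha ^ J * (1 - alpha) * p := fun p => by ring
  rw [hnum, hnum]
  linarith [mul_lt_mul_of_pos_right (hg hx hy hxy) hK]
end

section
/- Fix reals S_A>0, θ≥0, λ>0, V>0, an integer B≥1, and a real S_M≥0. Then the function ζ ↦ f(ζ,S_M) is strictly increasing on [1,∞). -/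
/-- Decentralized myopic cost `f(ζ,S_M)` with success probability
`ρ(ζ) = ζ·e^{−ζ}` and `B` channels. -/
noncomputable def fdec (SA th lam V : ℝ) (B : ℕ) (zeta SM : ℝ) : ℝ :=
  (∑ r ∈ Finset.range (B + 1),
    (B.choose r : ℝ) * (zeta * Real.exp (-zeta)) ^ r *
      (1 - zeta * Real.exp (-zeta)) ^ (B - r) *
      nuhat V ((r : ℝ) * SA * SM / (SA + SM))) +
  lam * zeta * (B : ℝ) * (1 + th * SM)


noncomputable def gsum (B : ℕ) (p : ℝ) (h : ℕ → ℝ) : ℝ :=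
  ∑ r ∈ Finset.range (B + 1), (B.choose r : ℝ) * p ^ r * (1 - p) ^ (B - r) * h r

lemma gsum_succ (B : ℕ) (p : ℝ) (h : ℕ → ℝ) :
    gsum (B + 1) p h = (1 - p) * gsum B p h + p * gsum B p (fun r => h (r + 1)) := by
  unfold gsum
  rw [Finset.sum_range_succ' (fun r => (((B+1).choose r : ℝ)) * p ^ r * (1 - p) ^ (B + 1 - r) * h r) (B+1)]
  rw [Finset.sum_range_succ' (fun r => ((B.choose r : ℝ)) * p ^ r * (1 - p) ^ (B - r) * h r) B]
  have e1 : ∀ i ∈ Finset.range (B + 1),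
      (((B+1).choose (i+1) : ℝ)) * p ^ (i+1) * (1 - p) ^ (B + 1 - (i+1)) * h (i+1)
      = ((B.choose i : ℝ)) * p ^ (i+1) * (1 - p) ^ (B - i) * h (i+1)
        + ((B.choose (i+1) : ℝ)) * p ^ (i+1) * (1 - p) ^ (B - i) * h (i+1) := by
    intro i hi
    rw [Nat.choose_succ_succ]
    push_cast
    ring
  rw [Finset.sum_congr rfl e1, Finset.sum_add_distrib]
  -- second sum: peel last term (which is 0) to get range B sum
  rw [Finset.sum_range_succ (fun i => ((B.choose (i+1) : ℝ)) * p ^ (i+1) * (1 - p) ^ (B - i) * h (i+1)) B]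
  have hz : ((B.choose (B+1) : ℝ)) * p ^ (B+1) * (1 - p) ^ (B - B) * h (B+1) = 0 := by
    rw [Nat.choose_succ_self]; push_cast; ring
  rw [hz, add_zero, mul_add, Finset.mul_sum, Finset.mul_sum]
  have e2 : ∀ i ∈ Finset.range B,
      (1 - p) * (((B.choose (i+1) : ℝ)) * p ^ (i+1) * (1 - p) ^ (B - (i+1)) * h (i+1))
      = ((B.choose (i+1) : ℝ)) * p ^ (i+1) * (1 - p) ^ (B - i) * h (i+1) := by
    intro i hi
    simp only [Finset.mem_range] at hi
    have : B - i = (B - (i+1)) + 1 := by omega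
    rw [this, pow_succ]; ring
  have e3 : ∀ i ∈ Finset.range (B+1),
      p * (((B.choose i : ℝ)) * p ^ i * (1 - p) ^ (B - i) * h (i + 1))
      = ((B.choose i : ℝ)) * p ^ (i+1) * (1 - p) ^ (B - i) * h (i+1) := by
    intro i hi
    rw [pow_succ]; ring
  rw [Finset.sum_congr rfl e2, Finset.sum_congr rfl e3]
  simp only [Nat.choose_zero_right, pow_zero, Nat.sub_zero]
  ring

lemma gsum_mono_h (B : ℕ) {p : ℝ} (hp : 0 ≤ p) (hp1 : p ≤ 1) {h₁ h₂ : ℕ → ℝ}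
    (hh : ∀ r, h₁ r ≤ h₂ r) : gsum B p h₁ ≤ gsum B p h₂ := by
  unfold gsum
  apply Finset.sum_le_sum
  intro r _
  have hc : (0:ℝ) ≤ (B.choose r : ℝ) * p ^ r * (1 - p) ^ (B - r) := by
    have h1 : (0:ℝ) ≤ 1 - p := by linarith
    positivity
  exact mul_le_mul_of_nonneg_left (hh r) hc

lemma gsum_anti (B : ℕ) (h : ℕ → ℝ) (hh : ∀ r, h (r + 1) ≤ h r) {p q : ℝ}
    (hp : 0 ≤ p) (hpq : p ≤ q) (hq : q ≤ 1) : gsum B q h ≤ gsum B p h := by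
  induction B generalizing h with
  | zero => simp [gsum]
  | succ B ih =>
    rw [gsum_succ, gsum_succ]
    have hq0 : 0 ≤ q := le_trans hp hpq
    have hp1 : p ≤ 1 := le_trans hpq hq
    have ha : gsum B q h ≤ gsum B p h := ih h hh
    have hc : gsum B q (fun r => h (r + 1)) ≤ gsum B p (fun r => h (r + 1)) :=
      ih _ (fun r => hh (r + 1))
    have hca : gsum B p (fun r => h (r + 1)) ≤ gsum B p h :=
      gsum_mono_h B hp hp1 (fun r => hh r)
    have h1 : (1 - q) * gsum B q h ≤ (1 - q) * gsum B p h :=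
      mul_le_mul_of_nonneg_left ha (by linarith)
    have h2 : q * gsum B q (fun r => h (r + 1)) ≤ q * gsum B p (fun r => h (r + 1)) :=
      mul_le_mul_of_nonneg_left hc hq0
    have key : (q - p) * (gsum B p h - gsum B p (fun r => h (r + 1))) ≥ 0 :=
      mul_nonneg (by linarith) (by linarith)
    nlinarith [key]

lemma rho_anti {x y : ℝ} (hx : 1 ≤ x) (hxy : x ≤ y) :
    y * Real.exp (-y) ≤ x * Real.exp (-x) := by
  have hexp : 1 + (y - x) ≤ Real.exp (y - x) := by
    have := Real.add_one_le_exp (y - x); linarith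
  have hkey : y ≤ x * (1 + (y - x)) := by nlinarith
  calc y * Real.exp (-y) ≤ x * (1 + (y - x)) * Real.exp (-y) :=
        mul_le_mul_of_nonneg_right hkey (Real.exp_pos _).le
    _ ≤ x * Real.exp (y - x) * Real.exp (-y) := by
        apply mul_le_mul_of_nonneg_right _ (Real.exp_pos _).le
        exact mul_le_mul_of_nonneg_left hexp (by linarith)
    _ = x * Real.exp (-x) := by
        rw [mul_assoc, ← Real.exp_add]
        ring_nf

lemma rho_le_one {x : ℝ} (hx : 0 ≤ x) : x * Real.exp (-x) ≤ 1 := by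
  have h1 : x ≤ Real.exp x := by
    have := Real.add_one_le_exp x; linarith
  have h2 : x * Real.exp (-x) ≤ Real.exp x * Real.exp (-x) :=
    mul_le_mul_of_nonneg_right h1 (Real.exp_pos _).le
  rwa [← Real.exp_add, add_neg_cancel, Real.exp_zero] at h2


/-- `ζ ↦ f(ζ,S_M)` is strictly increasing on `[1,∞)`. -/
theorem stmt_15 (SA th lam V : ℝ) (hSA : 0 < SA) (hth : 0 ≤ th)
    (hlam : 0 < lam) (hV : 0 < V) (B : ℕ) (hB : 1 ≤ B)
    (SM : ℝ) (hSM : 0 ≤ SM) :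
    StrictMonoOn (fun zeta => fdec SA th lam V B zeta SM) (Set.Ici 1) := by
  intro x hx y hy hxy
  simp only [Set.mem_Ici] at hx hy
  set h : ℕ → ℝ := fun r => nuhat V ((r : ℝ) * SA * SM / (SA + SM)) with hh_def
  have hfdec : ∀ z : ℝ, fdec SA th lam V B z SM
      = gsum B (z * Real.exp (-z)) h + lam * z * (B : ℝ) * (1 + th * SM) := by
    intro z; rfl
  simp only [hfdec]
  have hSAM : 0 < SA + SM := by linarith
  have hanti : ∀ r : ℕ, h (r + 1) ≤ h r := by
    intro r
    simp only [hh_def, nuhat]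
    have hc : 0 ≤ SA * SM / (SA + SM) := by positivity
    have hr0 : 0 ≤ (r : ℝ) := Nat.cast_nonneg r
    have harg1 : ((r : ℝ)) * SA * SM / (SA + SM) = (r : ℝ) * (SA * SM / (SA + SM)) := by
      ring
    have harg2 : ((r + 1 : ℕ) : ℝ) * SA * SM / (SA + SM)
        = ((r : ℝ) + 1) * (SA * SM / (SA + SM)) := by
      push_cast; ring
    rw [harg1, harg2]
    have hd1 : 0 < 1 + V * ((r : ℝ) * (SA * SM / (SA + SM))) := by positivity
    apply div_le_div_of_nonneg_left hV.le hd1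
    nlinarith
  have hρy : 0 ≤ y * Real.exp (-y) := by positivity
  have hρxy : y * Real.exp (-y) ≤ x * Real.exp (-x) := rho_anti hx hxy.le
  have hρx1 : x * Real.exp (-x) ≤ 1 := rho_le_one (by linarith)
  have hsum : gsum B (x * Real.exp (-x)) h ≤ gsum B (y * Real.exp (-y)) h :=
    gsum_anti B h hanti hρy hρxy hρx1
  have hB0 : (0:ℝ) < (B : ℝ) := by exact_mod_cast hB
  have hlin : lam * x * (B : ℝ) * (1 + th * SM) < lam * y * (B : ℝ) * (1 + th * SM) := by
    have hpos : 0 < lam * (B : ℝ) * (1 + th * SM) := by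
      have : 0 ≤ th * SM := mul_nonneg hth hSM
      positivity
    nlinarith
  linarith
end

section
/- Fix reals S_A>0, θ≥0, λ≥0, V>0, an integer B≥1, and a real ζ>0. Then the function S_M ↦ f(ζ,S_M) is strictly convex on [0,∞). -/
open Set

/-- `s ↦ (a*s+d)⁻¹` is strictly convex on `[0,∞)` for `a, d > 0`. -/
lemma aux_inv_strictConvex {a d : ℝ} (ha : 0 < a) (hd : 0 < d) :
    StrictConvexOn ℝ (Ici (0:ℝ)) (fun s : ℝ => (a * s + d)⁻¹) := by
  have base : StrictConvexOn ℝ (Ioi (0:ℝ)) (fun x : ℝ => x ^ (-1 : ℤ)) :=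
    strictConvexOn_zpow (by norm_num) (by norm_num)
  refine ⟨convex_Ici 0, ?_⟩
  intro x hx y hy hxy p q hp hq hpq
  have hx0 : (0:ℝ) ≤ x := hx
  have hy0 : (0:ℝ) ≤ y := hy
  have hxm : a * x + d ∈ Ioi (0:ℝ) := by
    simp only [mem_Ioi]; positivity
  have hym : a * y + d ∈ Ioi (0:ℝ) := by
    simp only [mem_Ioi]; positivity
  have hne : a * x + d ≠ a * y + d := by
    intro h
    apply hxy
    have : a * x = a * y := by linarith
    exact mul_left_cancel₀ ha.ne' this
  have key := base.2 hxm hym hne hp hq hpq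
  have harg : a * (p * x + q * y) + d = p * (a * x + d) + q * (a * y + d) := by
    nlinarith [hpq]
  simp only [smul_eq_mul, zpow_neg_one] at key ⊢
  rw [harg]
  exact key

/-- scaling a strictly convex function by a positive constant. -/
lemma aux_smul {s : Set ℝ} {f : ℝ → ℝ} {c : ℝ} (hc : 0 < c)
    (hf : StrictConvexOn ℝ s f) : StrictConvexOn ℝ s (fun x => c * f x) := by
  refine ⟨hf.1, ?_⟩
  intro x hx y hy hxy p q hp hq hpq
  have := hf.2 hx hy hxy hp hq hpq
  simp only [smul_eq_mul] at this ⊢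
  nlinarith

/-- congruence for strict convexity. -/
lemma aux_congr {s : Set ℝ} {f g : ℝ → ℝ} (hf : StrictConvexOn ℝ s f)
    (h : ∀ x ∈ s, f x = g x) : StrictConvexOn ℝ s g := by
  refine ⟨hf.1, ?_⟩
  intro x hx y hy hxy p q hp hq hpq
  have hm : p • x + q • y ∈ s := hf.1 hx hy hp.le hq.le hpq
  rw [← h _ hm, ← h _ hx, ← h _ hy]
  exact hf.2 hx hy hxy hp hq hpq

/-- congruence for convexity. -/
lemma aux_congr' {s : Set ℝ} {f g : ℝ → ℝ} (hf : ConvexOn ℝ s f)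
    (h : ∀ x ∈ s, f x = g x) : ConvexOn ℝ s g := by
  refine ⟨hf.1, ?_⟩
  intro x hx y hy p q hp hq hpq
  have hm : p • x + q • y ∈ s := hf.1 hx hy hp hq hpq
  rw [← h _ hm, ← h _ hx, ← h _ hy]
  exact hf.2 hx hy hp hq hpq

/-- the core fact: `s ↦ ν̂(V, c·s/(SA+s))` is strictly convex on `[0,∞)`. -/
lemma aux_nuhat {V SA c : ℝ} (hV : 0 < V) (hSA : 0 < SA) (hc : 0 < c) :
    StrictConvexOn ℝ (Ici (0:ℝ)) (fun s : ℝ => nuhat V (c * s / (SA + s))) := by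
  set a := 1 + V * c with ha_def
  have ha : 1 < a := by nlinarith
  have ha0 : 0 < a := by linarith
  set β := V * SA * (a - 1) / a with hβ_def
  have hβ : 0 < β := by
    apply div_pos _ ha0
    have h1 : 0 < a - 1 := by linarith
    positivity
  have h1 : StrictConvexOn ℝ (Ici (0:ℝ)) (fun s : ℝ => β * (a * s + SA)⁻¹) :=
    aux_smul hβ (aux_inv_strictConvex ha0 hSA)
  have h2 : StrictConvexOn ℝ (Ici (0:ℝ)) (fun s : ℝ => β * (a * s + SA)⁻¹ + V / a) :=
    h1.add_const (V / a)
  apply aux_congr h2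
  intro x hx
  have hx0 : (0:ℝ) ≤ x := hx
  have hden : (0:ℝ) < SA + x := by positivity
  have hden2 : (0:ℝ) < a * x + SA := by positivity
  have harg : 1 + V * (c * x / (SA + x)) = (a * x + SA) / (SA + x) := by
    field_simp; ring
  simp only [nuhat, harg]
  rw [div_div_eq_mul_div]
  rw [hβ_def, ha_def]
  field_simp
  ring

/-- for fixed `ζ > 0`, `S_M ↦ f(ζ,S_M)` is strictly convex on
`[0,∞)`. -/
theorem stmt_16 (SA th lam V : ℝ) (hSA : 0 < SA) (hth : 0 ≤ th)
    (hlam : 0 ≤ lam) (hV : 0 < V) (B : ℕ) (hB : 1 ≤ B)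
    (zeta : ℝ) (hzeta : 0 < zeta) :
    StrictConvexOn ℝ (Set.Ici (0 : ℝ)) (fun SM => fdec SA th lam V B zeta SM) := by
  set ρ := zeta * Real.exp (-zeta) with hρ_def
  have hρ0 : 0 < ρ := mul_pos hzeta (Real.exp_pos _)
  have hρ1 : ρ < 1 := by
    have h1 : zeta < Real.exp zeta := by
      have := Real.add_one_le_exp zeta; linarith
    have h2 : ρ * Real.exp zeta < 1 * Real.exp zeta := by
      rw [hρ_def, mul_assoc, ← Real.exp_add]
      simpa using h1
    exact lt_of_mul_lt_mul_right h2 (Real.exp_pos _).le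
  set P : ℕ → ℝ := fun r => (B.choose r : ℝ) * ρ ^ r * (1 - ρ) ^ (B - r) with hP
  have hPpos : ∀ r, r ≤ B → 0 < P r := by
    intro r hr
    have h1 : 0 < (B.choose r : ℝ) := by exact_mod_cast Nat.choose_pos hr
    have h2 : (0:ℝ) < 1 - ρ := by linarith
    simp only [hP]
    positivity
  set g : ℕ → ℝ → ℝ := fun r SM => P r * nuhat V ((r : ℝ) * SA * SM / (SA + SM)) with hg
  have hgstrict : ∀ r, 1 ≤ r → r ≤ B → StrictConvexOn ℝ (Ici (0:ℝ)) (g r) := by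
    intro r h1 hr
    have hc : (0:ℝ) < (r : ℝ) * SA := by
      have : (0:ℝ) < (r:ℝ) := by exact_mod_cast h1
      positivity
    have := aux_smul (hPpos r hr) (aux_nuhat hV hSA hc)
    apply aux_congr this
    intro x _
    simp only [hg, mul_assoc]
  have hgconv : ∀ r, r ≤ B → ConvexOn ℝ (Ici (0:ℝ)) (g r) := by
    intro r hr
    rcases Nat.eq_zero_or_pos r with h0 | hpos
    · subst h0
      have he : g 0 = fun _ => P 0 * V := by
        funext SM
        simp [hg, nuhat]
      rw [he]
      exact convexOn_const _ (convex_Ici 0)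
    · exact (hgstrict r hpos hr).convexOn
  -- sum over range B is convex
  have hsum : ConvexOn ℝ (Ici (0:ℝ)) (fun SM => ∑ r ∈ Finset.range B, g r SM) := by
    have : ConvexOn ℝ (Ici (0:ℝ)) (∑ r ∈ Finset.range B, g r) := by
      apply Finset.sum_induction g (fun f => ConvexOn ℝ (Ici (0:ℝ)) f)
      · intro f₁ f₂ hf₁ hf₂; exact hf₁.add hf₂
      · exact convexOn_const _ (convex_Ici 0)
      · intro r hr
        exact hgconv r (le_of_lt (Finset.mem_range.mp hr))
    apply aux_congr' this
    intro x _
    simp [Finset.sum_apply]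
  -- affine part is convex
  have haff : ConvexOn ℝ (Ici (0:ℝ)) (fun SM => lam * zeta * (B : ℝ) * (1 + th * SM)) := by
    have hC : (0:ℝ) ≤ lam * zeta * (B:ℝ) * th := by positivity
    have h1 : ConvexOn ℝ (Ici (0:ℝ)) (fun SM : ℝ => lam * zeta * (B:ℝ) * th * SM) := by
      have := (convexOn_id (convex_Ici (0:ℝ))).smul hC
      apply aux_congr' this
      intro x _; simp [smul_eq_mul]
    have h2 := h1.add_const (lam * zeta * (B:ℝ))
    apply aux_congr' h2
    intro x _; simp only [Pi.add_apply]; ring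
  -- combine
  have hmain : StrictConvexOn ℝ (Ici (0:ℝ))
      (fun SM => g B SM + ((∑ r ∈ Finset.range B, g r SM) +
        lam * zeta * (B : ℝ) * (1 + th * SM))) :=
    (hgstrict B hB le_rfl).add_convexOn (hsum.add haff)
  apply aux_congr hmain
  intro x _
  simp only [fdec, hg, hP, ← hρ_def]
  rw [Finset.sum_range_succ]
  ring
end

section
/- Fix reals S_A>0, θ≥0, λ>0, V∈(0,1], an integer B≥1, and a real S_M≥0. Define, for ζ∈(0,1), g(ζ) := Σ_{r=0}^{B} binom(B,r)·ρ(ζ)^r·(1−ρ(ζ))^{B−r}·ν̂(V, r·S_A·S_M/(S_A+S_M))·(r − ρ(ζ)·B)/(ρ(ζ)·(1−ρ(ζ))) + λ·B·(e^{ζ}/(1−ζ))·(1+θ·S_M). Then g is strictly increasing on (0,1). -/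
/-! Write `b_{n,r} = C(n,r) pʳ (1-p)ⁿ⁻ʳ`. Since `p(1-p) b'_{n,r} = (r - n p) b_{n,r}`, the sum in `g`
is the derivative at `p = ρ(ζ)` of `∑ᵣ aᵣ b_{B,r}` with `aᵣ = ν̂(V, r·S_A·S_M/(S_A+S_M))`. That
derivative is `B ∑ᵣ (aᵣ₊₁ - aᵣ) b_{B-1,r}`, a Bernstein polynomial with nondecreasing coefficients
(`r ↦ aᵣ` is convex), hence nondecreasing in `p ∈ [0,1]`, and `ρ` is nondecreasing on `(0,1)`.
The remaining term `λ B (1+θ S_M) e^ζ/(1-ζ)` is strictly increasing. -/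

open Polynomial Finset Real

section CommRing

variable {R : Type*} [CommRing R]

theorem bernsteinPolynomial.X_mul_one_sub_X_mul_derivative (n ν : ℕ) :
    X * (1 - X) * derivative (bernsteinPolynomial R n ν) =
      ((ν : R[X]) - (n : R[X]) * X) * bernsteinPolynomial R n ν := by
  rcases lt_or_ge n ν with h | h
  · simp [bernsteinPolynomial.eq_zero_of_lt R h]
  obtain ⟨m, rfl⟩ := Nat.exists_eq_add_of_le h
  rcases ν with _ | ν <;> rcases m with _ | m <;>
    simp [bernsteinPolynomial, derivative_mul, derivative_pow] <;> ring

variable (R) in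
noncomputable def bernsteinSum (n : ℕ) (a : ℕ → R) : R[X] :=
  ∑ r ∈ range (n + 1), a r • bernsteinPolynomial R n r

theorem derivative_bernsteinSum_succ (n : ℕ) (a : ℕ → R) :
    derivative (bernsteinSum R (n + 1) a) =
      (n + 1 : R[X]) * bernsteinSum R n (fun r => a (r + 1) - a r) := by
  set b := bernsteinPolynomial R n
  have hshift : ∑ r ∈ range (n + 1), a (r + 1) • b (r + 1) =
      ∑ r ∈ range (n + 1), a r • b r - a 0 • b 0 := by
    have hb : b (n + 1) = 0 := bernsteinPolynomial.eq_zero_of_lt R (Nat.lt_succ_self n)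
    rw [sum_range_succ, hb, sum_range_succ' (fun r => a r • b r)]
    simp
  calc derivative (bernsteinSum R (n + 1) a)
      = ∑ r ∈ range (n + 1), a (r + 1) • ((n + 1 : R[X]) * (b r - b (r + 1)))
          + a 0 • (-(n + 1 : R[X]) * b 0) := by
        simp [bernsteinSum, sum_range_succ', b,
          bernsteinPolynomial.derivative_succ_aux, bernsteinPolynomial.derivative_zero]
    _ = (n + 1 : R[X]) * (∑ r ∈ range (n + 1), a (r + 1) • b r
          - (∑ r ∈ range (n + 1), a (r + 1) • b (r + 1) + a 0 • b 0)) := by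
        simp only [smul_sub, mul_smul_comm, sum_sub_distrib, mul_sub, mul_add, mul_sum]
        simp only [smul_eq_C_mul]
        ring
    _ = (n + 1 : R[X]) * bernsteinSum R n (fun r => a (r + 1) - a r) := by
        rw [hshift, sub_add_cancel, bernsteinSum, ← sum_sub_distrib]
        simp only [sub_smul, b]

end CommRing

theorem eval_derivative_bernsteinSum {K : Type*} [Field K] (n : ℕ) (a : ℕ → K) {p : K}
    (hp : p * (1 - p) ≠ 0) :
    (derivative (bernsteinSum K n a)).eval p =
      ∑ r ∈ range (n + 1), (n.choose r : K) * p ^ r * (1 - p) ^ (n - r) * a r *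
        ((r - p * n) / (p * (1 - p))) := by
  have key : X * (1 - X) * derivative (bernsteinSum K n a) =
      ∑ r ∈ range (n + 1), a r • (((r : K[X]) - (n : K[X]) * X) * bernsteinPolynomial K n r) := by
    simp only [bernsteinSum, derivative_sum, derivative_smul, mul_sum, mul_smul_comm,
      bernsteinPolynomial.X_mul_one_sub_X_mul_derivative]
  have := congrArg (eval p) key
  simp only [eval_mul, eval_X, eval_sub, eval_one, eval_finsetSum, eval_smul, eval_natCast,
    eval_pow, smul_eq_mul, bernsteinPolynomial] at this
  simp only [mul_div_assoc', ← sum_div]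
  rw [eq_div_iff hp, mul_comm, this]
  exact sum_congr rfl fun r _ => by ring

section Bernstein

variable {a : ℕ → ℝ} {n : ℕ}

theorem eval_bernsteinSum_nonneg (ha : ∀ r, 0 ≤ a r) {p : ℝ} (hp : p ∈ Set.Icc 0 1) :
    0 ≤ (bernsteinSum ℝ n a).eval p := by
  simp only [bernsteinSum, eval_finsetSum, eval_smul, smul_eq_mul, bernsteinPolynomial,
    eval_mul, eval_pow, eval_natCast, eval_X, eval_sub, eval_one]
  have := sub_nonneg.2 hp.2
  have := hp.1
  exact sum_nonneg fun r _ => mul_nonneg (ha r) (by positivity)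

theorem eval_derivative_bernsteinSum_nonneg (ha : Monotone a) {p : ℝ} (hp : p ∈ Set.Icc 0 1) :
    0 ≤ (derivative (bernsteinSum ℝ n a)).eval p := by
  cases n with
  | zero => simp [bernsteinSum, bernsteinPolynomial]
  | succ n =>
    rw [derivative_bernsteinSum_succ, eval_mul]
    exact mul_nonneg (by simp; positivity)
      (eval_bernsteinSum_nonneg (fun r => sub_nonneg.2 (ha r.le_succ)) hp)

theorem monotoneOn_eval_bernsteinSum (ha : Monotone a) :
    MonotoneOn (fun p => (bernsteinSum ℝ n a).eval p) (Set.Icc 0 1) := by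
  refine monotoneOn_of_deriv_nonneg (convex_Icc 0 1) (Polynomial.continuousOn _)
    (Polynomial.differentiableOn _) fun p hp => ?_
  rw [Polynomial.deriv]
  exact eval_derivative_bernsteinSum_nonneg ha (interior_subset hp)

end Bernstein

theorem monotoneOn_mul_exp_neg : MonotoneOn (fun x : ℝ => x * exp (-x)) (Set.Iic 1) := by
  have hderiv (x : ℝ) : HasDerivAt (fun x : ℝ => x * exp (-x)) (exp (-x) * (1 - x)) x :=
    ((hasDerivAt_id x).fun_mul (hasDerivAt_neg x).exp).congr_deriv (by simp; ring)
  refine monotoneOn_of_deriv_nonneg (convex_Iic 1) (by fun_prop) (by fun_prop) fun x hx => ?_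
  rw [interior_Iic] at hx
  rw [(hderiv x).deriv]
  exact mul_nonneg (exp_pos _).le (sub_nonneg.2 (le_of_lt hx))

theorem mul_exp_neg_mem_Ioo {x : ℝ} (hx : x ∈ Set.Ioo 0 1) : x * exp (-x) ∈ Set.Ioo 0 1 :=
  ⟨by have := hx.1; positivity,
    mul_lt_one_of_nonneg_of_lt_one_left hx.1.le hx.2 (exp_le_one_iff.2 (by linarith [hx.1]))⟩

theorem strictMonoOn_exp_div_one_sub : StrictMonoOn (fun x : ℝ => exp x / (1 - x)) (Set.Iio 1) :=
  fun x hx y hy hxy => calc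
    exp x / (1 - x) < exp y / (1 - x) := div_lt_div_of_pos_right (exp_lt_exp.2 hxy) (sub_pos.2 hx)
    _ ≤ exp y / (1 - y) := div_le_div_of_nonneg_left (exp_pos y).le (sub_pos.2 hy) (by linarith)

theorem monotone_nuhat_natCast_mul_succ_sub {V c : ℝ} (hV : 0 ≤ V) (hc : 0 ≤ c) :
    Monotone fun r : ℕ => nuhat V ((r + 1 : ℕ) * c) - nuhat V (r * c) := by
  have hdiff (r : ℕ) : nuhat V ((r + 1 : ℕ) * c) - nuhat V (r * c) =
      -(V ^ 2 * c / ((1 + V * (r * c)) * (1 + V * ((r + 1) * c)))) := by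
    unfold nuhat
    push_cast
    field_simp
    ring
  refine monotone_nat_of_le_succ fun r => ?_
  rw [hdiff, hdiff, neg_le_neg_iff]
  push_cast
  gcongr <;> linarith

theorem stmt_18_general (SA th lam V : ℝ) (hSA : 0 < SA) (hth : 0 ≤ th)
    (hlam : 0 < lam) (hV0 : 0 < V)
    (B : ℕ) (hB : 1 ≤ B) (SM : ℝ) (hSM : 0 ≤ SM) :
    StrictMonoOn
      (fun zeta : ℝ =>
        (∑ r ∈ Finset.range (B + 1),
          (B.choose r : ℝ) * (zeta * Real.exp (-zeta)) ^ r *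
            (1 - zeta * Real.exp (-zeta)) ^ (B - r) *
            nuhat V ((r : ℝ) * SA * SM / (SA + SM)) *
            (((r : ℝ) - (zeta * Real.exp (-zeta)) * (B : ℝ)) /
              ((zeta * Real.exp (-zeta)) * (1 - zeta * Real.exp (-zeta))))) +
        lam * (B : ℝ) * (Real.exp zeta / (1 - zeta)) * (1 + th * SM))
      (Set.Ioo 0 1) := by
  obtain ⟨m, rfl⟩ : ∃ m, B = m + 1 := ⟨B - 1, by omega⟩
  set c := SA * SM / (SA + SM)
  set a : ℕ → ℝ := fun r => nuhat V (r * c)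
  have hmono : MonotoneOn
      (fun ζ => (derivative (bernsteinSum ℝ (m + 1) a)).eval (ζ * exp (-ζ))) (Set.Ioo 0 1) := by
    intro x hx y hy hxy
    have hIcc {z : ℝ} (hz : z ∈ Set.Ioo 0 1) : z * exp (-z) ∈ Set.Icc 0 1 :=
      Set.Ioo_subset_Icc_self (mul_exp_neg_mem_Ioo hz)
    simp only [derivative_bernsteinSum_succ, eval_mul, eval_add, eval_natCast, eval_one]
    exact mul_le_mul_of_nonneg_left
      (monotoneOn_eval_bernsteinSum (monotone_nuhat_natCast_mul_succ_sub hV0.le (by positivity))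
        (hIcc hx) (hIcc hy) (monotoneOn_mul_exp_neg hx.2.le hy.2.le hxy))
      (by positivity)
  have hstrict : StrictMonoOn (fun ζ => lam * ((m + 1 : ℕ) : ℝ) * (exp ζ / (1 - ζ)) * (1 + th * SM))
      (Set.Ioo 0 1) := fun x hx y hy hxy => by
    have : 0 < 1 + th * SM := by positivity
    exact mul_lt_mul_of_pos_right (mul_lt_mul_of_pos_left
      (strictMonoOn_exp_div_one_sub hx.2 hy.2 hxy) (by positivity)) this
  refine (hmono.add_strictMono hstrict).congr fun ζ hζ => ?_
  obtain ⟨hρ0, hρ1⟩ := mul_exp_neg_mem_Ioo hζ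
  dsimp only
  rw [eval_derivative_bernsteinSum _ _ (by nlinarith)]
  congr 1
  refine sum_congr rfl fun r _ => ?_
  simp only [a, c, mul_div_assoc, mul_assoc]

/-- the rescaled ζ-derivative `g` of the decentralized myopic
cost is strictly increasing on `(0,1)`. -/
theorem stmt_18 (SA th lam V : ℝ) (hSA : 0 < SA) (hth : 0 ≤ th)
    (hlam : 0 < lam) (hV0 : 0 < V) (hV1 : V ≤ 1)
    (B : ℕ) (hB : 1 ≤ B) (SM : ℝ) (hSM : 0 ≤ SM) :
    StrictMonoOn
      (fun zeta : ℝ =>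
        (∑ r ∈ Finset.range (B + 1),
          (B.choose r : ℝ) * (zeta * Real.exp (-zeta)) ^ r *
            (1 - zeta * Real.exp (-zeta)) ^ (B - r) *
            nuhat V ((r : ℝ) * SA * SM / (SA + SM)) *
            (((r : ℝ) - (zeta * Real.exp (-zeta)) * (B : ℝ)) /
              ((zeta * Real.exp (-zeta)) * (1 - zeta * Real.exp (-zeta))))) +
        lam * (B : ℝ) * (Real.exp zeta / (1 - zeta)) * (1 + th * SM))
      (Set.Ioo 0 1) :=
  stmt_18_general SA th lam V hSA hth hlam hV0 B hB SM hSM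
end

section
/- Fix a real V∈(0,1], a real S_T≥0, and an integer B≥1. Then for every real x ∈ [0, 1/(e−1)]: Σ_{r=0}^{B} binom(B,r)·x^{r}·(V/(1+V·r·S_T))·[ (r·(1+x) − x·B)² − r·(1+x) + (r·(1+x) − x·B)·x ] ≥ 0. -/
/-!
The bracket in the sum equals `Q(r) = r(r-1) - 2x·r(B-r) + x²(B-r)(B-r-1)`, and the
absorption identities `binom(B,r)·r(r-1) = B(B-1)·binom(B-2,r-2)`,
`binom(B,r)·r(B-r) = B(B-1)·binom(B-2,r-1)` and `binom(B,r)·(B-r)(B-r-1) = B(B-1)·binom(B-2,r)`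
turn `Σ_r binom(B,r) x^r f(r) Q(r)` into
`B(B-1)·Σ_k binom(B-2,k) x^(k+2) (f k - 2 f(k+1) + f(k+2))`.
For `f(r) = V/(1+V r S_T)` the second differences are nonnegative, since `f` is convex in `r`.
-/

open Finset

section BinomialSums

variable {R : Type*} [CommRing R]

theorem sum_range_choose_mul_cast_mul (n : ℕ) (g : ℕ → R) :
    ∑ r ∈ range (n + 2), ((n + 1).choose r : R) * r * g r
      = ((n + 1 : ℕ) : R) * ∑ k ∈ range (n + 1), (n.choose k : R) * g (k + 1) := by
  rw [sum_range_succ', mul_sum]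
  refine (add_eq_left.mpr (by simp)).trans (sum_congr rfl fun k _ => ?_)
  have h := congrArg (Nat.cast : ℕ → R) (Nat.add_one_mul_choose_eq n k)
  push_cast at h ⊢
  linear_combination (-g (k + 1)) * h

theorem sum_range_choose_mul_cast_sub_mul (n : ℕ) (g : ℕ → R) :
    ∑ r ∈ range (n + 2), ((n + 1).choose r : R) * (((n + 1 : ℕ) : R) - r) * g r
      = ((n + 1 : ℕ) : R) * ∑ k ∈ range (n + 1), (n.choose k : R) * g k := by
  rw [sum_range_succ, mul_sum]
  refine (add_eq_left.mpr (by simp)).trans (sum_congr rfl fun k hk => ?_)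
  have h := congrArg (Nat.cast : ℕ → R) (Nat.choose_mul_succ_eq n k)
  push_cast [Nat.cast_sub (show k ≤ n + 1 by grind)] at h ⊢
  linear_combination (-g k) * h

theorem sum_range_choose_mul_cast_mul_cast_sub_one_mul (n : ℕ) (g : ℕ → R) :
    ∑ r ∈ range (n + 3), ((n + 2).choose r : R) * (r * (r - 1)) * g r
      = ((n + 2 : ℕ) : R) * (n + 1 : ℕ) * ∑ k ∈ range (n + 1), (n.choose k : R) * g (k + 2) := by
  calc _ = ∑ r ∈ range (n + 3), ((n + 2).choose r : R) * r * ((r - 1) * g r) :=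
        sum_congr rfl fun _ _ => by ring
    _ = ((n + 2 : ℕ) : R) * ∑ k ∈ range (n + 2), ((n + 1).choose k : R) * k * g (k + 1) := by
        rw [sum_range_choose_mul_cast_mul (n + 1)]
        congr 1
        exact sum_congr rfl fun _ _ => by push_cast; ring
    _ = _ := by rw [sum_range_choose_mul_cast_mul, mul_assoc]

theorem sum_range_choose_mul_cast_mul_cast_sub_mul (n : ℕ) (g : ℕ → R) :
    ∑ r ∈ range (n + 3), ((n + 2).choose r : R) * (r * (((n + 2 : ℕ) : R) - r)) * g r
      = ((n + 2 : ℕ) : R) * (n + 1 : ℕ) * ∑ k ∈ range (n + 1), (n.choose k : R) * g (k + 1) := by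
  calc _ = ∑ r ∈ range (n + 3), ((n + 2).choose r : R) * r * ((((n + 2 : ℕ) : R) - r) * g r) :=
        sum_congr rfl fun _ _ => by ring
    _ = ((n + 2 : ℕ) : R) * ∑ k ∈ range (n + 2),
          ((n + 1).choose k : R) * (((n + 1 : ℕ) : R) - k) * g (k + 1) := by
        rw [sum_range_choose_mul_cast_mul (n + 1)]
        congr 1
        exact sum_congr rfl fun _ _ => by push_cast; ring
    _ = _ := by rw [sum_range_choose_mul_cast_sub_mul, mul_assoc]

theorem sum_range_choose_mul_cast_sub_mul_cast_sub_mul (n : ℕ) (g : ℕ → R) :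
    ∑ r ∈ range (n + 3),
        ((n + 2).choose r : R) * ((((n + 2 : ℕ) : R) - r) * (((n + 1 : ℕ) : R) - r)) * g r
      = ((n + 2 : ℕ) : R) * (n + 1 : ℕ) * ∑ k ∈ range (n + 1), (n.choose k : R) * g k := by
  calc _ = ∑ r ∈ range (n + 3),
          ((n + 2).choose r : R) * (((n + 2 : ℕ) : R) - r) * ((((n + 1 : ℕ) : R) - r) * g r) :=
        sum_congr rfl fun _ _ => by ring
    _ = ((n + 2 : ℕ) : R) * ∑ k ∈ range (n + 2),
          ((n + 1).choose k : R) * (((n + 1 : ℕ) : R) - k) * g k := by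
        rw [sum_range_choose_mul_cast_sub_mul (n + 1)]
        congr 1; exact sum_congr rfl fun _ _ => by ring
    _ = _ := by rw [sum_range_choose_mul_cast_sub_mul, mul_assoc]

theorem sum_range_choose_mul_pow_mul_eq_sum_second_diff (n : ℕ) (x : R) (f : ℕ → R) :
    ∑ r ∈ range (n + 3), ((n + 2).choose r : R) * x ^ r * f r *
        (r * (r - 1) - 2 * x * (r * (((n + 2 : ℕ) : R) - r)) +
          x ^ 2 * ((((n + 2 : ℕ) : R) - r) * (((n + 1 : ℕ) : R) - r)))
      = ((n + 2 : ℕ) : R) * (n + 1 : ℕ) *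
          ∑ k ∈ range (n + 1),
            (n.choose k : R) * x ^ (k + 2) * (f k - 2 * f (k + 1) + f (k + 2)) := by
  calc _ = ∑ r ∈ range (n + 3), ((n + 2).choose r : R) * (r * (r - 1)) * (x ^ r * f r)
        - 2 * ∑ r ∈ range (n + 3),
            ((n + 2).choose r : R) * (r * (((n + 2 : ℕ) : R) - r)) * (x ^ (r + 1) * f r)
        + ∑ r ∈ range (n + 3), ((n + 2).choose r : R) *
            ((((n + 2 : ℕ) : R) - r) * (((n + 1 : ℕ) : R) - r)) * (x ^ (r + 2) * f r) := by
        rw [mul_sum, ← sum_sub_distrib, ← sum_add_distrib]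
        exact sum_congr rfl fun _ _ => by ring
    _ = _ := by
        rw [sum_range_choose_mul_cast_mul_cast_sub_one_mul,
          sum_range_choose_mul_cast_mul_cast_sub_mul,
          sum_range_choose_mul_cast_sub_mul_cast_sub_mul]
        simp only [mul_sum, ← sum_sub_distrib, ← sum_add_distrib]
        exact sum_congr rfl fun _ _ => by ring

end BinomialSums

theorem div_one_add_mul_second_diff_nonneg {V S : ℝ} (hV : 0 < V) (hS : 0 ≤ S) {t : ℝ}
    (ht : 0 ≤ t) :
    0 ≤ V / (1 + V * t * S) - 2 * (V / (1 + V * (t + 1) * S)) + V / (1 + V * (t + 2) * S) := by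
  have h₀ : 0 < 1 + V * t * S := by positivity
  have h₁ : 0 < 1 + V * (t + 1) * S := by positivity
  have h₂ : 0 < 1 + V * (t + 2) * S := by positivity
  have key : V / (1 + V * t * S) - 2 * (V / (1 + V * (t + 1) * S)) + V / (1 + V * (t + 2) * S)
      = 2 * V * (V * S) ^ 2 /
          ((1 + V * t * S) * (1 + V * (t + 1) * S) * (1 + V * (t + 2) * S)) := by
    field_simp
    ring
  rw [key]
  positivity

theorem stmt_19_general (V ST : ℝ) (hV0 : 0 < V) (hST : 0 ≤ ST)
    (B : ℕ) (x : ℝ)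
    (hx : x ∈ Set.Icc (0 : ℝ) (1 / (Real.exp 1 - 1))) :
    0 ≤ ∑ r ∈ Finset.range (B + 1),
      (B.choose r : ℝ) * x ^ r * (V / (1 + V * (r : ℝ) * ST)) *
        (((r : ℝ) * (1 + x) - x * (B : ℝ)) ^ 2 - (r : ℝ) * (1 + x) +
          ((r : ℝ) * (1 + x) - x * (B : ℝ)) * x) := by
  obtain _ | _ | n := B
  · simp
  · simp [sum_range_succ, sq]
  have hQ : ∀ r : ℕ, (((r : ℝ) * (1 + x) - x * ((n + 2 : ℕ) : ℝ)) ^ 2 - (r : ℝ) * (1 + x) +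
        ((r : ℝ) * (1 + x) - x * ((n + 2 : ℕ) : ℝ)) * x)
      = r * (r - 1) - 2 * x * (r * (((n + 2 : ℕ) : ℝ) - r)) +
          x ^ 2 * ((((n + 2 : ℕ) : ℝ) - r) * (((n + 1 : ℕ) : ℝ) - r)) := fun r => by
    push_cast; ring
  simp_rw [hQ]
  rw [sum_range_choose_mul_pow_mul_eq_sum_second_diff]
  refine mul_nonneg (by positivity) (sum_nonneg fun k _ => mul_nonneg
    (mul_nonneg (Nat.cast_nonneg _) (pow_nonneg hx.1 _)) ?_)
  push_cast
  exact div_one_add_mul_second_diff_nonneg hV0 hST k.cast_nonneg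

/-- the key combinatorial inequality `x²·s_B(x,S_T) ≥ 0`:
for `V ∈ (0,1]`, `S_T ≥ 0`, `B ≥ 1` and `x ∈ [0, 1/(e−1)]`,
`Σ_{r=0}^{B} binom(B,r)·x^r·ν̂(V,r·S_T)·[(r(1+x)−xB)² − r(1+x) + (r(1+x)−xB)·x] ≥ 0`. -/
theorem stmt_19 (V ST : ℝ) (hV0 : 0 < V) (hV1 : V ≤ 1) (hST : 0 ≤ ST)
    (B : ℕ) (hB : 1 ≤ B) (x : ℝ)
    (hx : x ∈ Set.Icc (0 : ℝ) (1 / (Real.exp 1 - 1))) :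
    0 ≤ ∑ r ∈ Finset.range (B + 1),
      (B.choose r : ℝ) * x ^ r * (V / (1 + V * (r : ℝ) * ST)) *
        (((r : ℝ) * (1 + x) - x * (B : ℝ)) ^ 2 - (r : ℝ) * (1 + x) +
          ((r : ℝ) * (1 + x) - x * (B : ℝ)) * x) :=
  stmt_19_general V ST hV0 hST B x hx
end
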